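/- arXiv:2207.01678 — 6 statements merged into one kernel-verified Lean document; each statement's English description precedes it below -/
import Mathlib

section
/- Assume the additive model Y = h(Xⱼ) + H(X₋ⱼ) + ε, where h is monotonic and its derivative h′ is integrable and bounded in absolute value on [0,1], E|H(X₋ⱼ)| < ∞, and ε is integrable with E ε = 0 and independent of X, and assume the distribution of X has a density. Then |κⱼ^{(1)}| ≥ (inf_{x∈[0,1]} |h′(x)|) · E[Var(Xⱼ | X₋ⱼ)], where κⱼ^{(1)} = E{[Y − E(Y | X₋ⱼ)][Xⱼ − E Xⱼ]}. -/
/-!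
Write `W = E[Xⱼ | X₋ⱼ]` and `c = inf |h'|`. Since conditional expectation is self-adjoint on `L²`
and fixes `H(X₋ⱼ)`, and `ε` is centred and independent of `X`, one gets
`κⱼ⁽¹⁾ = E[h(Xⱼ)(Xⱼ - W)]`, while `E[Var(Xⱼ | X₋ⱼ)] = E[Xⱼ(Xⱼ - W)]`.
For increasing `h` we have `c ≤ h'`, so `g x = h x - c x` is increasing and
`E[g(Xⱼ)(Xⱼ - W)] = E[(g(Xⱼ) - g(W))(Xⱼ - W)] ≥ 0`, which is the claim; decreasing `h` is
handled by passing to `-h`.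
-/

open MeasureTheory ProbabilityTheory Set

theorem monotoneOn_sub_mul_of_le_hasDerivWithinAt {D : Set ℝ} (hD : Convex ℝ D) {f f' : ℝ → ℝ}
    {c : ℝ} (hf : ∀ x ∈ D, HasDerivWithinAt f (f' x) D x) (hc : ∀ x ∈ D, c ≤ f' x) :
    MonotoneOn (fun x => f x - c * x) D := by
  have hg : ∀ x ∈ D, HasDerivWithinAt (fun x => f x - c * x) (f' x - c) D x := fun x hx => by
    have := (hf x hx).sub ((hasDerivWithinAt_id x D).const_mul c)
    rwa [mul_one] at this
  refine monotoneOn_of_hasDerivWithinAt_nonneg hD (fun x hx => (hg x hx).continuousWithinAt)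
    (fun x hx => (hg x (interior_subset hx)).mono interior_subset) fun x hx => ?_
  exact sub_nonneg.2 (hc x (interior_subset hx))

theorem MonotoneOn.monotoneOn_sub_mul_of_le_abs_deriv {D : Set ℝ} (hD : Convex ℝ D)
    (hDnt : D.Nontrivial) {f f' : ℝ → ℝ} {c : ℝ} (hfm : MonotoneOn f D)
    (hf : ∀ x ∈ D, HasDerivWithinAt f (f' x) D x) (hc : ∀ x ∈ D, c ≤ |f' x|) :
    MonotoneOn (fun x => f x - c * x) D := by
  refine monotoneOn_sub_mul_of_le_hasDerivWithinAt hD hf fun x hx => ?_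
  have hacc : AccPt x (Filter.principal D) := hD.isPreconnected.preperfect_of_nontrivial hDnt x hx
  rw [← abs_of_nonneg ((hf x hx).nonneg_of_monotoneOn hacc hfm)]
  exact hc x hx

namespace MeasureTheory

variable {Ω : Type*} {m m0 : MeasurableSpace Ω} {μ : Measure Ω} [IsFiniteMeasure μ]

theorem ae_mem_Icc_condExp (hm : m ≤ m0) {F : Ω → ℝ} {a b : ℝ} (hF : Integrable F μ)
    (hab : ∀ᵐ ω ∂μ, F ω ∈ Icc a b) : ∀ᵐ ω ∂μ, μ[F|m] ω ∈ Icc a b := by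
  have hlow : μ[fun _ => a|m] ≤ᵐ[μ] μ[F|m] :=
    condExp_mono (integrable_const a) hF (hab.mono fun _ h => h.1)
  have hhigh : μ[F|m] ≤ᵐ[μ] μ[fun _ => b|m] :=
    condExp_mono hF (integrable_const b) (hab.mono fun _ h => h.2)
  rw [condExp_const hm] at hlow hhigh
  filter_upwards [hlow, hhigh] with ω h1 h2 using ⟨h1, h2⟩

theorem integral_mul_sub_condExp_eq_zero (hm : m ≤ m0) {ψ F : Ω → ℝ}
    (hψm : StronglyMeasurable[m] ψ) (hψ : MemLp ψ 2 μ) (hF : MemLp F 2 μ) :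
    ∫ ω, ψ ω * (F ω - μ[F|m] ω) ∂μ = 0 := by
  have hψF : Integrable (fun ω => ψ ω * F ω) μ := hψ.integrable_mul hF
  have hψF' : Integrable (fun ω => ψ ω * μ[F|m] ω) μ := hψ.integrable_mul (hF.condExp one_le_two)
  have hpull : ∫ ω, ψ ω * μ[F|m] ω ∂μ = ∫ ω, ψ ω * F ω ∂μ := calc
    _ = ∫ ω, μ[ψ * F|m] ω ∂μ := (integral_congr_ae
          (condExp_mul_of_stronglyMeasurable_left hψm hψF (hF.integrable one_le_two))).symm
    _ = _ := integral_condExp hm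
  simp_rw [mul_sub]
  rw [integral_sub hψF hψF', hpull, sub_self]

theorem integral_sub_condExp_mul_eq (hm : m ≤ m0) {F Z : Ω → ℝ} (hF : MemLp F 2 μ)
    (hZ : MemLp Z 2 μ) :
    ∫ ω, (F ω - μ[F|m] ω) * Z ω ∂μ = ∫ ω, F ω * (Z ω - μ[Z|m] ω) ∂μ := by
  have hF' : MemLp (μ[F|m]) 2 μ := hF.condExp one_le_two
  have hZ' : MemLp (μ[Z|m]) 2 μ := hZ.condExp one_le_two
  have i1 : Integrable (fun ω => F ω * (Z ω - μ[Z|m] ω)) μ := hF.integrable_mul (hZ.sub hZ')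
  have i2 : Integrable (fun ω => μ[Z|m] ω * (F ω - μ[F|m] ω)) μ := hZ'.integrable_mul (hF.sub hF')
  have i3 : Integrable (fun ω => μ[F|m] ω * (Z ω - μ[Z|m] ω)) μ := hF'.integrable_mul (hZ.sub hZ')
  have i12 : Integrable (fun ω => F ω * (Z ω - μ[Z|m] ω) + μ[Z|m] ω * (F ω - μ[F|m] ω)) μ :=
    i1.add i2
  calc ∫ ω, (F ω - μ[F|m] ω) * Z ω ∂μ
      = ∫ ω, (F ω * (Z ω - μ[Z|m] ω) + μ[Z|m] ω * (F ω - μ[F|m] ω)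
          - μ[F|m] ω * (Z ω - μ[Z|m] ω)) ∂μ := integral_congr_ae (ae_of_all _ fun ω => by ring)
    _ = ∫ ω, F ω * (Z ω - μ[Z|m] ω) ∂μ := by
      rw [integral_sub i12 i3, integral_add i1 i2,
        integral_mul_sub_condExp_eq_zero hm stronglyMeasurable_condExp hZ' hF,
        integral_mul_sub_condExp_eq_zero hm stronglyMeasurable_condExp hF' hZ, add_zero, sub_zero]

theorem integral_sub_condExp_sq (hm : m ≤ m0) {X : Ω → ℝ} (hX : MemLp X 2 μ) :
    ∫ ω, (X ω - μ[X|m] ω) ^ 2 ∂μ = ∫ ω, X ω * (X ω - μ[X|m] ω) ∂μ := by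
  have hX' : MemLp (μ[X|m]) 2 μ := hX.condExp one_le_two
  have i1 : Integrable (fun ω => X ω * (X ω - μ[X|m] ω)) μ := hX.integrable_mul (hX.sub hX')
  have i2 : Integrable (fun ω => μ[X|m] ω * (X ω - μ[X|m] ω)) μ := hX'.integrable_mul (hX.sub hX')
  calc ∫ ω, (X ω - μ[X|m] ω) ^ 2 ∂μ
      = ∫ ω, (X ω * (X ω - μ[X|m] ω) - μ[X|m] ω * (X ω - μ[X|m] ω)) ∂μ :=
        integral_congr_ae (ae_of_all _ fun ω => by ring)
    _ = ∫ ω, X ω * (X ω - μ[X|m] ω) ∂μ := by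
      rw [integral_sub i1 i2,
        integral_mul_sub_condExp_eq_zero hm stronglyMeasurable_condExp hX' hX, sub_zero]

theorem _root_.MonotoneOn.integral_comp_mul_sub_condExp_nonneg {g : ℝ → ℝ} {a b : ℝ}
    (hgm : MonotoneOn g (Icc a b)) (hm : m ≤ m0) {X : Ω → ℝ} (hX : Measurable X)
    (hXab : ∀ᵐ ω ∂μ, X ω ∈ Icc a b) (hg : Measurable g) :
    0 ≤ ∫ ω, g (X ω) * (X ω - μ[X|m] ω) ∂μ := by
  have hXL : MemLp X 2 μ := memLp_of_bounded hXab hX.aestronglyMeasurable 2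
  have hW : ∀ᵐ ω ∂μ, μ[X|m] ω ∈ Icc a b :=
    ae_mem_Icc_condExp hm (hXL.integrable one_le_two) hXab
  have hgWm : StronglyMeasurable[m] (fun ω => g (μ[X|m] ω)) :=
    (hg.comp stronglyMeasurable_condExp.measurable).stronglyMeasurable
  have hg_mem : ∀ x ∈ Icc a b, g x ∈ Icc (g a) (g b) := fun x hx =>
    ⟨hgm ⟨le_rfl, hx.1.trans hx.2⟩ hx hx.1, hgm hx ⟨hx.1.trans hx.2, le_rfl⟩ hx.2⟩
  have hgX : MemLp (fun ω => g (X ω)) 2 μ :=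
    memLp_of_bounded (hXab.mono fun ω => hg_mem _) (hg.comp hX).aestronglyMeasurable 2
  have hgW : MemLp (fun ω => g (μ[X|m] ω)) 2 μ :=
    memLp_of_bounded (hW.mono fun ω => hg_mem _) (hgWm.mono hm).aestronglyMeasurable 2
  have hD : MemLp (fun ω => X ω - μ[X|m] ω) 2 μ := hXL.sub (hXL.condExp one_le_two)
  have i1 : Integrable (fun ω => g (X ω) * (X ω - μ[X|m] ω)) μ := hgX.integrable_mul hD
  have i2 : Integrable (fun ω => g (μ[X|m] ω) * (X ω - μ[X|m] ω)) μ := hgW.integrable_mul hD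
  calc (0 : ℝ)
      ≤ ∫ ω, (g (X ω) - g (μ[X|m] ω)) * (X ω - μ[X|m] ω) ∂μ := integral_nonneg_of_ae <| by
        filter_upwards [hXab, hW] with ω hx hw
        exact (monovaryOn_id_iff.2 hgm).sub_mul_sub_nonneg hw hx
    _ = ∫ ω, g (X ω) * (X ω - μ[X|m] ω) ∂μ - ∫ ω, g (μ[X|m] ω) * (X ω - μ[X|m] ω) ∂μ := by
        rw [← integral_sub i1 i2]
        exact integral_congr_ae (ae_of_all _ fun ω => by ring)
    _ = ∫ ω, g (X ω) * (X ω - μ[X|m] ω) ∂μ := by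
        rw [integral_mul_sub_condExp_eq_zero hm hgWm hgW hXL, sub_zero]

theorem mul_integral_sub_condExp_sq_le (hm : m ≤ m0) {X : Ω → ℝ} {h : ℝ → ℝ} {a b c : ℝ}
    (hX : Measurable X) (hXab : ∀ᵐ ω ∂μ, X ω ∈ Icc a b) (hh : Measurable h)
    (hhX : MemLp (fun ω => h (X ω)) 2 μ) (hmono : MonotoneOn (fun x => h x - c * x) (Icc a b)) :
    c * ∫ ω, (X ω - μ[X|m] ω) ^ 2 ∂μ ≤ ∫ ω, h (X ω) * (X ω - μ[X|m] ω) ∂μ := by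
  have hXL : MemLp X 2 μ := memLp_of_bounded hXab hX.aestronglyMeasurable 2
  have hD : MemLp (fun ω => X ω - μ[X|m] ω) 2 μ := hXL.sub (hXL.condExp one_le_two)
  have i1 : Integrable (fun ω => h (X ω) * (X ω - μ[X|m] ω)) μ := hhX.integrable_mul hD
  have i2 : Integrable (fun ω => X ω * (X ω - μ[X|m] ω)) μ := hXL.integrable_mul hD
  have hg_nonneg := hmono.integral_comp_mul_sub_condExp_nonneg hm hX hXab (by fun_prop)
  have expand : ∫ ω, (h (X ω) - c * X ω) * (X ω - μ[X|m] ω) ∂μ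
      = ∫ ω, h (X ω) * (X ω - μ[X|m] ω) ∂μ - c * ∫ ω, X ω * (X ω - μ[X|m] ω) ∂μ := by
    rw [← integral_const_mul, ← integral_sub i1 (i2.const_mul c)]
    exact integral_congr_ae (ae_of_all _ fun ω => by ring)
  rw [integral_sub_condExp_sq hm hXL]
  linarith

section AdditiveModel

variable {F G ε : Ω → ℝ}

theorem condExp_add_add_ae_eq_of_indep (hm : m ≤ m0) (hF : Integrable F μ)
    (hGm : StronglyMeasurable[m] G) (hG : Integrable G μ) (hε : Measurable ε)
    (hεint : Integrable ε μ) (hεmean : ∫ ω, ε ω ∂μ = 0)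
    (hεm : Indep (MeasurableSpace.comap ε inferInstance) m μ) :
    μ[fun ω => F ω + G ω + ε ω|m] =ᵐ[μ] fun ω => μ[F|m] ω + G ω := by
  have hε0 : μ[ε|m] =ᵐ[μ] fun _ => 0 := by
    simpa [hεmean] using condExp_indep_eq hε.comap_le hm
      (measurable_iff_comap_le.2 le_rfl).stronglyMeasurable hεm
  filter_upwards [condExp_add (hF.add hG) hεint m, condExp_add hF hG m, hε0] with ω h1 h2 h3
  change μ[F + G + ε|m] ω = _
  rw [h1, Pi.add_apply, h2, Pi.add_apply, h3, condExp_of_stronglyMeasurable hm hGm hG, add_zero]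

theorem integral_sub_condExp_mul_sub_integral_of_indep (hm : m ≤ m0) {Z : Ω → ℝ}
    (hF : MemLp F 2 μ) (hGm : StronglyMeasurable[m] G) (hG : Integrable G μ)
    (hε : Measurable ε) (hεint : Integrable ε μ) (hεmean : ∫ ω, ε ω ∂μ = 0)
    (hεm : Indep (MeasurableSpace.comap ε inferInstance) m μ)
    (hZ : MemLp Z 2 μ) (hεZ : IndepFun ε Z μ) :
    ∫ ω, (F ω + G ω + ε ω - μ[fun ω => F ω + G ω + ε ω|m] ω) * (Z ω - ∫ ω', Z ω' ∂μ) ∂μ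
      = ∫ ω, F ω * (Z ω - μ[Z|m] ω) ∂μ := by
  set EZ := ∫ ω', Z ω' ∂μ
  have hZc : MemLp (fun ω => Z ω - EZ) 2 μ := hZ.sub (memLp_const EZ)
  have hεZc : IndepFun ε (fun ω => Z ω - EZ) μ :=
    hεZ.comp (ψ := fun z => z - EZ) measurable_id (by fun_prop)
  have i1 : Integrable (fun ω => (F ω - μ[F|m] ω) * (Z ω - EZ)) μ :=
    (hF.sub (hF.condExp one_le_two)).integrable_mul hZc
  have i2 : Integrable (fun ω => ε ω * (Z ω - EZ)) μ :=
    hεZc.integrable_mul hεint (hZc.integrable one_le_two)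
  have hεZ0 : ∫ ω, ε ω * (Z ω - EZ) ∂μ = 0 := by
    rw [hεZc.integral_fun_mul_eq_mul_integral hεint.aestronglyMeasurable
      hZc.aestronglyMeasurable, hεmean, zero_mul]
  have hZc' : μ[fun ω => Z ω - EZ|m] =ᵐ[μ] fun ω => μ[Z|m] ω - EZ := by
    filter_upwards [condExp_sub (hZ.integrable one_le_two) (integrable_const EZ) m] with ω h
    rw [condExp_const hm] at h
    exact h
  calc _ = ∫ ω, ((F ω - μ[F|m] ω) * (Z ω - EZ) + ε ω * (Z ω - EZ)) ∂μ := by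
        refine integral_congr_ae ?_
        filter_upwards [condExp_add_add_ae_eq_of_indep hm (hF.integrable one_le_two) hGm hG hε
          hεint hεmean hεm] with ω h
        rw [h]; ring
    _ = ∫ ω, (F ω - μ[F|m] ω) * (Z ω - EZ) ∂μ := by rw [integral_add i1 i2, hεZ0, add_zero]
    _ = ∫ ω, F ω * (Z ω - EZ - μ[fun ω => Z ω - EZ|m] ω) ∂μ :=
        integral_sub_condExp_mul_eq hm hF hZc
    _ = ∫ ω, F ω * (Z ω - μ[Z|m] ω) ∂μ := integral_congr_ae <| by
        filter_upwards [hZc'] with ω h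
        rw [h]; ring

end AdditiveModel

theorem mul_integral_sub_condExp_sq_le_abs_integral (hm : m ≤ m0) {X G ε : Ω → ℝ}
    {h h' : ℝ → ℝ} {a b c : ℝ} (hab : a < b) (hX : Measurable X) (hXab : ∀ ω, X ω ∈ Icc a b)
    (hh : Measurable h) (hderiv : ∀ x ∈ Icc a b, HasDerivWithinAt h (h' x) (Icc a b) x)
    (hmono : MonotoneOn h (Icc a b) ∨ AntitoneOn h (Icc a b)) (hc : ∀ x ∈ Icc a b, c ≤ |h' x|)
    (hGm : StronglyMeasurable[m] G) (hG : Integrable G μ) (hε : Measurable ε)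
    (hεint : Integrable ε μ) (hεmean : ∫ ω, ε ω ∂μ = 0)
    (hεm : Indep (MeasurableSpace.comap ε inferInstance) m μ) (hεX : IndepFun ε X μ) :
    c * ∫ ω, (X ω - μ[X|m] ω) ^ 2 ∂μ ≤
      |∫ ω, (h (X ω) + G ω + ε ω - μ[fun ω => h (X ω) + G ω + ε ω|m] ω)
        * (X ω - ∫ ω', X ω' ∂μ) ∂μ| := by
  obtain ⟨C, hC⟩ := isCompact_Icc.exists_bound_of_continuousOn
    fun x hx => (hderiv x hx).continuousWithinAt
  have hhX : MemLp (fun ω => h (X ω)) 2 μ :=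
    (memLp_top_of_bound (hh.comp hX).aestronglyMeasurable C
      (ae_of_all _ fun ω => hC _ (hXab ω))).mono_exponent le_top
  have hXL : MemLp X 2 μ := memLp_of_bounded (ae_of_all _ hXab) hX.aestronglyMeasurable 2
  have hnt : (Icc a b).Nontrivial :=
    ⟨a, left_mem_Icc.2 hab.le, b, right_mem_Icc.2 hab.le, hab.ne⟩
  rw [integral_sub_condExp_mul_sub_integral_of_indep hm hhX hGm hG hε hεint hεmean hεm hXL hεX]
  rcases hmono with hmono | hanti
  · exact (mul_integral_sub_condExp_sq_le hm hX (ae_of_all _ hXab) hh hhX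
      (hmono.monotoneOn_sub_mul_of_le_abs_deriv (convex_Icc a b) hnt hderiv hc)).trans
      (le_abs_self _)
  · have hneg := hanti.neg.monotoneOn_sub_mul_of_le_abs_deriv (convex_Icc a b) hnt
      (fun x hx => (hderiv x hx).neg) (by simpa only [abs_neg] using hc)
    calc _ ≤ ∫ ω, -h (X ω) * (X ω - μ[X|m] ω) ∂μ :=
          mul_integral_sub_condExp_sq_le hm hX (ae_of_all _ hXab) hh.neg hhX.neg hneg
      _ = -∫ ω, h (X ω) * (X ω - μ[X|m] ω) ∂μ := by simp only [neg_mul, integral_neg]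
      _ ≤ _ := neg_le_abs _

end MeasureTheory

theorem stmt_7_general
    (Ω : Type) [MeasurableSpace Ω]
    (μ : Measure Ω) [IsProbabilityMeasure μ]
    (p : ℕ) (j : Fin p) (X : Ω → Fin p → ℝ)
    (hX : Measurable X)
    (hXrange : ∀ ω k, X ω k ∈ Set.Icc (0 : ℝ) 1)
    (h : ℝ → ℝ) (h' : ℝ → ℝ) (hh : Measurable h)
    -- h has derivative h' on [0,1]
    (hderiv : ∀ x ∈ Set.Icc (0 : ℝ) 1, HasDerivWithinAt h (h' x) (Set.Icc (0 : ℝ) 1) x)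
    -- h is monotonic
    (hmono : MonotoneOn h (Set.Icc (0 : ℝ) 1) ∨ AntitoneOn h (Set.Icc (0 : ℝ) 1))
    (H : ({k : Fin p // k ≠ j} → ℝ) → ℝ) (hH : Measurable H)
    (hHint : Integrable (fun ω => H (fun k => X ω k.1)) μ)
    (ε : Ω → ℝ) (hε : Measurable ε) (hεint : Integrable ε μ)
    (hεmean : ∫ ω, ε ω ∂μ = 0)
    (hεindep : IndepFun ε X μ)
    (Y : Ω → ℝ)
    (hYdef : ∀ ω, Y ω = h (X ω j) + H (fun k => X ω k.1) + ε ω) :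
    sInf ((fun x => |h' x|) '' Set.Icc (0 : ℝ) 1)
        * ∫ ω, (X ω j
            - (μ[fun ω' => X ω' j
                | MeasurableSpace.comap (fun ω (k : {k : Fin p // k ≠ j}) => X ω k.1)
                    inferInstance]) ω) ^ 2 ∂μ ≤
      |∫ ω, (Y ω
          - (μ[Y | MeasurableSpace.comap (fun ω (k : {k : Fin p // k ≠ j}) => X ω k.1)
              inferInstance]) ω)
        * (X ω j - ∫ ω', X ω' j ∂μ) ∂μ| := by
  have hπ : Measurable fun (x : Fin p → ℝ) (k : {k : Fin p // k ≠ j}) => x k.1 := by fun_prop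
  have hinf : ∀ x ∈ Icc (0 : ℝ) 1, sInf ((fun x => |h' x|) '' Icc 0 1) ≤ |h' x| := fun x hx =>
    csInf_le ⟨0, by rintro _ ⟨y, -, rfl⟩; exact abs_nonneg _⟩ ⟨x, hx, rfl⟩
  obtain rfl : Y = _ := funext hYdef
  exact mul_integral_sub_condExp_sq_le_abs_integral (hπ.comp hX).comap_le zero_lt_one
    ((measurable_pi_apply j).comp hX) (fun ω => hXrange ω j) hh hderiv hmono hinf
    (hH.comp (measurable_iff_comap_le.2 le_rfl)).stronglyMeasurable hHint hε hεint hεmean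
    ((IndepFun_iff_Indep _ _ μ).1 (hεindep.comp measurable_id hπ))
    (hεindep.comp measurable_id (measurable_pi_apply j))

/-- **Proposition 1 (signal strength lower bound for monotone additive effects).**
Assume the additive model `Y = h(Xⱼ) + H(X₋ⱼ) + ε` where `h` is monotonic on `[0,1]` with a
derivative `h'` that is integrable and bounded in absolute value on `[0,1]`,
`E|H(X₋ⱼ)| < ∞`, `ε` is integrable with mean zero and independent of `X`, and the distribution
of `X` has a density.  Then
  `|κⱼ⁽¹⁾| ≥ (inf_{x∈[0,1]} |h'(x)|) · E[Var(Xⱼ | X₋ⱼ)]`,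
where `κⱼ⁽¹⁾ = E{[Y − E(Y|X₋ⱼ)][Xⱼ − E Xⱼ]}`. -/
theorem stmt_7
    (Ω : Type) [MeasurableSpace Ω]
    (μ : Measure Ω) [IsProbabilityMeasure μ]
    (p : ℕ) (j : Fin p) (X : Ω → Fin p → ℝ)
    (hX : Measurable X)
    (hXrange : ∀ ω k, X ω k ∈ Set.Icc (0 : ℝ) 1)
    -- the distribution of the feature vector X has a density
    (hpdf : HasPDF X μ (volume : Measure (Fin p → ℝ)))
    (h : ℝ → ℝ) (h' : ℝ → ℝ) (hh : Measurable h)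
    -- h has derivative h' on [0,1]
    (hderiv : ∀ x ∈ Set.Icc (0 : ℝ) 1, HasDerivWithinAt h (h' x) (Set.Icc (0 : ℝ) 1) x)
    -- h is monotonic
    (hmono : MonotoneOn h (Set.Icc (0 : ℝ) 1) ∨ AntitoneOn h (Set.Icc (0 : ℝ) 1))
    -- h' is integrable and bounded in absolute value on [0,1]
    (hint : IntervalIntegrable h' volume 0 1)
    (M : ℝ) (hM : ∀ x ∈ Set.Icc (0 : ℝ) 1, |h' x| ≤ M)
    (H : ({k : Fin p // k ≠ j} → ℝ) → ℝ) (hH : Measurable H)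
    (hHint : Integrable (fun ω => H (fun k => X ω k.1)) μ)
    (ε : Ω → ℝ) (hε : Measurable ε) (hεint : Integrable ε μ)
    (hεmean : ∫ ω, ε ω ∂μ = 0)
    (hεindep : IndepFun ε X μ)
    (Y : Ω → ℝ)
    (hYdef : ∀ ω, Y ω = h (X ω j) + H (fun k => X ω k.1) + ε ω) :
    sInf ((fun x => |h' x|) '' Set.Icc (0 : ℝ) 1)
        * ∫ ω, (X ω j
            - (μ[fun ω' => X ω' j
                | MeasurableSpace.comap (fun ω (k : {k : Fin p // k ≠ j}) => X ω k.1)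
                    inferInstance]) ω) ^ 2 ∂μ ≤
      |∫ ω, (Y ω
          - (μ[Y | MeasurableSpace.comap (fun ω (k : {k : Fin p // k ≠ j}) => X ω k.1)
              inferInstance]) ω)
        * (X ω j - ∫ ω', X ω' j ∂μ) ∂μ| :=
  stmt_7_general Ω μ p j X hX hXrange h h' hh hderiv hmono H hH hHint ε hε hεint hεmean hεindep Y
    hYdef
end

section
/- In the model of Example 1 with p ≥ 2, define m(x) = 1_{0.3 ≤ x₁ ≤ 0.7} and m̃(x) = 1_{x₁ ≥ 0.3} − 1_{x₂ > 0.7} for x ∈ [0,1]^p. Then m(X) and m̃(X) are both versions of the conditional mean E(Y | X) (in particular m(X) = m̃(X) almost surely), and for the feature X₂: MDA(Y, X₂) = 0 if m is used in the MDA definition, whereas MDA(Y, X₂) = E(1_{X₁ > 0.7} − 1_{X₂° > 0.7})² > 0 if m̃ is used instead, where X₂° denotes the permuted copy of X₂. -/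
/-!
On `{X₁ ≤ 0.7}` the vector `X` is uniform on `[0, 0.7]^p`, so `X₂ ≤ 0.7` there, while on
`{X₁ > 0.7}` we have `X₂ = X₁`; hence `1_{X₂ > 0.7} = 1_{X₁ > 0.7}` almost surely, which is exactly
`m(X) = m̃(X)`. Both are `E(Y | X)` because `ε` is integrable, centred and independent of `X`.
Permuting `X₂` does not change `m`, so its MDA vanishes. For `m̃`,
`Y - m̃(X_{(2)}) = ε - (1_{X₁ > 0.7} - 1_{X₂° > 0.7})`, both indicators are independent of the
centred `ε`, so the cross term drops out and the MDA is `E(1_{X₁ > 0.7} - 1_{X₂° > 0.7})²`. It is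
positive since `{X₁ > 0.7, X₂° ≤ 0.7}` has probability `0.3 · 0.7` by independence.
-/

open MeasureTheory ProbabilityTheory Set Filter

lemma indicator_Icc_eq_indicator_Ici_sub_indicator_Ioi {α G : Type*} [LinearOrder α]
    [AddGroup G] {a b : α} (hab : a ≤ b) (f : α → G) :
    (Icc a b).indicator f = (Ici a).indicator f - (Ioi b).indicator f := by
  rw [← Ici_sdiff_Ioi, indicator_sdiff (Ioi_subset_Ici hab)]

lemma norm_indicator_one_le {α : Type*} (t : Set α) (a : α) :
    ‖t.indicator (fun _ => (1 : ℝ)) a‖ ≤ 1 :=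
  (norm_indicator_le_norm_self _ _).trans (by simp)

lemma norm_indicator_one_sub_indicator_one_le {α : Type*} (t : Set α) (a b : α) :
    ‖t.indicator (fun _ => (1 : ℝ)) a - t.indicator (fun _ => (1 : ℝ)) b‖ ≤ 1 := by
  by_cases ha : a ∈ t <;> by_cases hb : b ∈ t <;> simp [ha, hb]

section

variable {Ω : Type*} [MeasurableSpace Ω] {μ : Measure Ω}

lemma ae_imp_of_ae_cond [IsFiniteMeasure μ] {s : Set Ω} (hs : MeasurableSet s) {P : Ω → Prop}
    (h : ∀ᵐ ω ∂μ[|s], P ω) : ∀ᵐ ω ∂μ, ω ∈ s → P ω := by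
  rw [ae_iff, cond_apply hs, mul_eq_zero] at h
  rw [ae_iff]
  simpa [measure_ne_top, ofPred_and] using h

lemma ae_apply_le_of_map_cond_eq_pi_uniform [IsFiniteMeasure μ] {ι : Type*} [Fintype ι]
    {X : Ω → ι → ℝ} (hX : Measurable X) {s : Set Ω} (hs : MeasurableSet s) {c : ℝ}
    (hc : 0 < c) (h : (μ[|s]).map X =
      Measure.pi fun _ : ι => (ENNReal.ofReal c)⁻¹ • volume.restrict (Icc (0 : ℝ) c))
    (j : ι) : ∀ᵐ ω ∂μ, ω ∈ s → X ω j ≤ c := by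
  have : IsFiniteMeasure ((ENNReal.ofReal c)⁻¹ • volume.restrict (Icc (0 : ℝ) c)) :=
    Measure.smul_finite _ (by simpa using hc)
  have hle : ∀ᵐ y ∂(ENNReal.ofReal c)⁻¹ • volume.restrict (Icc (0 : ℝ) c), y ≤ c :=
    Measure.ae_smul_measure ((ae_restrict_mem measurableSet_Icc).mono fun _ hy => hy.2) _
  refine ae_imp_of_ae_cond hs (ae_of_ae_map (p := fun x => x j ≤ c) hX.aemeasurable ?_)
  rw [h]
  exact Measure.tendsto_eval_ae_ae (μ := fun _ : ι => _) (i := j) hle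

lemma ae_lt_iff_lt_of_map_cond_eq_pi_uniform [IsFiniteMeasure μ] {ι : Type*} [Fintype ι]
    {X : Ω → ι → ℝ} (hX : Measurable X) {i : ι} {c : ℝ} (hc : 0 < c)
    (h_le : (μ[|{ω | X ω i ≤ c}]).map X =
      Measure.pi fun _ : ι => (ENNReal.ofReal c)⁻¹ • volume.restrict (Icc (0 : ℝ) c))
    (h_gt : ∀ᵐ ω ∂μ, c < X ω i → ∀ k, X ω k = X ω i) (j : ι) :
    ∀ᵐ ω ∂μ, (c < X ω j ↔ c < X ω i) := by
  have hs : MeasurableSet {ω | X ω i ≤ c} :=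
    measurableSet_le ((measurable_pi_apply i).comp hX) measurable_const
  filter_upwards [ae_apply_le_of_map_cond_eq_pi_uniform hX hs hc h_le j, h_gt] with ω hle heq
  exact ⟨fun h => lt_of_not_ge fun h' => (hle h').not_gt h, fun h => heq h j ▸ h⟩

lemma measure_preimage_ne_zero_of_map_eq_restrict_Icc {f : Ω → ℝ} (hf : Measurable f)
    {a b : ℝ} (h : μ.map f = volume.restrict (Icc a b)) {s : Set ℝ} (hs : MeasurableSet s) {c d : ℝ}
    (hcd : c < d) (hac : a ≤ c) (hdb : d ≤ b) (hsub : Ioo c d ⊆ s) : μ (f ⁻¹' s) ≠ 0 := by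
  rw [← Measure.map_apply hf hs, h, Measure.restrict_apply hs]
  refine ((measure_mono (subset_inter hsub ?_)).trans_lt' (by simpa using hcd)).ne'
  exact Ioo_subset_Icc_self.trans (Icc_subset_Icc hac hdb)

lemma condExp_comap_add_of_indepFun [IsFiniteMeasure μ] {β : Type*} [MeasurableSpace β]
    {X : Ω → β} {g : β → ℝ} {ε : Ω → ℝ} (hX : Measurable X) (hg : Measurable g)
    (hgX : Integrable (fun ω => g (X ω)) μ) (hε_meas : Measurable ε) (hε : Integrable ε μ)
    (hind : IndepFun ε X μ) :
    μ[fun ω => g (X ω) + ε ω | MeasurableSpace.comap X inferInstance] =ᵐ[μ]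
      fun ω => g (X ω) + ∫ ω, ε ω ∂μ := by
  have hgX_meas : StronglyMeasurable[MeasurableSpace.comap X inferInstance] fun ω => g (X ω) :=
    (hg.comp (comap_measurable X)).stronglyMeasurable
  have hε_cond : μ[ε | MeasurableSpace.comap X inferInstance] =ᵐ[μ] fun _ => ∫ ω, ε ω ∂μ :=
    condExp_indep_eq hε_meas.comap_le hX.comap_le (comap_measurable ε).stronglyMeasurable
      ((IndepFun_iff_Indep _ _ _).mp hind)
  filter_upwards [condExp_add hgX hε (MeasurableSpace.comap X inferInstance), hε_cond]
    with ω hadd hε_ω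
  refine hadd.trans ?_
  rw [Pi.add_apply, condExp_of_stronglyMeasurable hX.comap_le hgX_meas hgX, hε_ω]

lemma integral_mul_eq_zero_of_indepFun {f ε : Ω → ℝ} (hind : IndepFun f ε μ)
    (hf : AEStronglyMeasurable f μ) (hε : AEStronglyMeasurable ε μ) (hε0 : ∫ ω, ε ω ∂μ = 0) :
    ∫ ω, f ω * ε ω ∂μ = 0 := by
  simpa [hε0] using hind.integral_mul_eq_mul_integral hf hε

lemma integral_sub_sq_eq_add_of_integral_mul_eq_zero [IsFiniteMeasure μ] {ε f : Ω → ℝ} {C : ℝ}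
    (hε : Integrable ε μ) (hε2 : Integrable (fun ω => ε ω ^ 2) μ)
    (hf : AEStronglyMeasurable f μ) (hfC : ∀ ω, ‖f ω‖ ≤ C) (horth : ∫ ω, f ω * ε ω ∂μ = 0) :
    ∫ ω, (ε ω - f ω) ^ 2 ∂μ = ∫ ω, ε ω ^ 2 ∂μ + ∫ ω, f ω ^ 2 ∂μ := by
  have hfε : Integrable (fun ω => 2 * (f ω * ε ω)) μ :=
    (hε.bdd_mul hf (ae_of_all _ hfC)).const_mul 2
  have hf2 : Integrable (fun ω => f ω ^ 2) μ := by
    simpa only [sq] using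
      (Integrable.of_bound hf C (ae_of_all _ hfC)).bdd_mul hf (ae_of_all _ hfC)
  calc ∫ ω, (ε ω - f ω) ^ 2 ∂μ = ∫ ω, (ε ω ^ 2 - 2 * (f ω * ε ω) + f ω ^ 2) ∂μ := by
        congr 1; funext ω; ring
    _ = ∫ ω, ε ω ^ 2 ∂μ + ∫ ω, f ω ^ 2 ∂μ := by
        rw [integral_add (f := fun ω => ε ω ^ 2 - 2 * (f ω * ε ω)) (hε2.sub hfε) hf2,
          integral_sub hε2 hfε, integral_const_mul, horth, mul_zero, sub_zero]

lemma integral_sub_sq_indicator_sub_indicator_of_indepFun [IsFiniteMeasure μ] {ε U V : Ω → ℝ}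
    {t : Set ℝ} (ht : MeasurableSet t) (hε : Integrable ε μ)
    (hε2 : Integrable (fun ω => ε ω ^ 2) μ) (hε0 : ∫ ω, ε ω ∂μ = 0) (hU : Measurable U)
    (hV : Measurable V) (hUε : IndepFun U ε μ) (hVε : IndepFun V ε μ) :
    ∫ ω, (ε ω - (t.indicator (fun _ => (1 : ℝ)) (U ω)
        - t.indicator (fun _ => (1 : ℝ)) (V ω))) ^ 2 ∂μ =
      ∫ ω, ε ω ^ 2 ∂μ + ∫ ω, (t.indicator (fun _ => (1 : ℝ)) (U ω)
        - t.indicator (fun _ => (1 : ℝ)) (V ω)) ^ 2 ∂μ := by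
  have hI : Measurable (t.indicator fun _ => (1 : ℝ)) := measurable_const.indicator ht
  have hint : ∀ {W : Ω → ℝ}, Measurable W →
      Integrable (fun ω => t.indicator (fun _ => (1 : ℝ)) (W ω) * ε ω) μ := fun hW =>
    hε.bdd_mul (hI.comp hW).aestronglyMeasurable (ae_of_all _ fun _ => norm_indicator_one_le _ _)
  have horth : ∀ {W : Ω → ℝ}, Measurable W → IndepFun W ε μ →
      ∫ ω, t.indicator (fun _ => (1 : ℝ)) (W ω) * ε ω ∂μ = 0 := fun hW hWε =>
    integral_mul_eq_zero_of_indepFun (hWε.comp hI measurable_id)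
      (hI.comp hW).aestronglyMeasurable hε.aestronglyMeasurable hε0
  refine integral_sub_sq_eq_add_of_integral_mul_eq_zero hε hε2
    ((hI.comp hU).sub (hI.comp hV)).aestronglyMeasurable
    (fun ω => norm_indicator_one_sub_indicator_one_le _ _ _) ?_
  simp only [sub_mul]
  rw [integral_sub (hint hU) (hint hV), horth hU hUε, horth hV hVε, sub_zero]

lemma integral_sq_indicator_sub_indicator_pos [IsFiniteMeasure μ] {f g : Ω → ℝ}
    (hf : Measurable f) (hg : Measurable g) (hfg : IndepFun f g μ) {t : Set ℝ}
    (ht : MeasurableSet t) (hft : μ (f ⁻¹' t) ≠ 0) (hgt : μ (g ⁻¹' tᶜ) ≠ 0) :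
    0 < ∫ ω, (t.indicator (fun _ => (1 : ℝ)) (f ω)
      - t.indicator (fun _ => (1 : ℝ)) (g ω)) ^ 2 ∂μ := by
  set D := fun ω => t.indicator (fun _ => (1 : ℝ)) (f ω) - t.indicator (fun _ => (1 : ℝ)) (g ω)
  have hD : Measurable D :=
    ((measurable_const.indicator ht).comp hf).sub ((measurable_const.indicator ht).comp hg)
  have hD2 : Integrable (fun ω => D ω ^ 2) μ :=
    Integrable.of_bound (hD.pow_const 2).aestronglyMeasurable 1 <| ae_of_all _ fun ω => by
      rw [norm_pow]
      exact pow_le_one₀ (norm_nonneg _) (norm_indicator_one_sub_indicator_one_le t (f ω) (g ω))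
  rw [integral_pos_iff_support_of_nonneg (fun ω => sq_nonneg _) hD2]
  have hsub : f ⁻¹' t ∩ g ⁻¹' tᶜ ⊆ Function.support fun ω => D ω ^ 2 := fun ω ⟨h1, h2⟩ => by
    simp [D, indicator_of_mem (show f ω ∈ t from h1),
      indicator_of_notMem (show g ω ∉ t from h2)]
  refine (pos_iff_ne_zero.2 ?_).trans_le (measure_mono hsub)
  rw [hfg.measure_inter_preimage_eq_mul _ _ ht ht.compl]
  exact mul_ne_zero hft hgt

end

/-- **Proposition 3 (identification issue of the MDA) in the model of Example 1.**
In the model of Example 1 (with `p ≥ 2`), define `m(x) = 1_{0.3 ≤ x₁ ≤ 0.7}` and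
`m̃(x) = 1_{x₁ ≥ 0.3} − 1_{x₂ > 0.7}`.  Then `m(X)` and `m̃(X)` are both versions of the
conditional mean `E(Y | X)` (in particular `m(X) = m̃(X)` almost surely), and for the feature
`X₂`: `MDA(Y, X₂) = 0` when `m` is used, whereas
`MDA(Y, X₂) = E(1_{X₁ > 0.7} − 1_{X₂° > 0.7})² > 0` when `m̃` is used, where `X₂°` is the
permuted copy of `X₂`. -/
theorem stmt_9
    (Ω : Type) [MeasurableSpace Ω]
    (μ : Measure Ω) [IsProbabilityMeasure μ]
    (p : ℕ) (X : Ω → Fin p → ℝ) (hX : Measurable X)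
    (j₁ j₂ : Fin p) (hj₁ : (j₁ : ℕ) = 0) (hj₂ : (j₂ : ℕ) = 1)
    -- (1) X₁ is uniformly distributed on [0,1]
    (h1 : Measure.map (fun ω => X ω j₁) μ = volume.restrict (Set.Icc (0 : ℝ) 1))
    -- (2) conditional on {X₁ ≤ 0.7}, X is uniformly distributed over [0, 0.7]^p
    (h2 : Measure.map X (ProbabilityTheory.cond μ {ω | X ω j₁ ≤ 0.7}) =
      Measure.pi fun _ : Fin p =>
        (ENNReal.ofReal 0.7)⁻¹ • volume.restrict (Set.Icc (0 : ℝ) 0.7))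
    -- (3) conditional on {X₁ > 0.7}, all coordinates of X are equal to X₁
    (h3 : ∀ᵐ ω ∂μ, 0.7 < X ω j₁ → ∀ k, X ω k = X ω j₁)
    -- the model error
    (ε : Ω → ℝ) (hε : Measurable ε)
    (hεint2 : Integrable (fun ω => (ε ω) ^ 2) μ) (hεint : Integrable ε μ)
    (hεmean : ∫ ω, ε ω ∂μ = 0) (hεindep : IndepFun ε X μ)
    -- the response Y = 1_{0.3 ≤ X₁ ≤ 0.7} + ε
    (Y : Ω → ℝ)
    (hYdef : ∀ ω, Y ω =
      (Set.Icc (0.3 : ℝ) 0.7).indicator (fun _ => (1 : ℝ)) (X ω j₁) + ε ω)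
    -- the permuted copy X₂° of X₂: independent of (X, Y), same distribution as X₂
    (Xperm : Ω → ℝ) (hXperm : Measurable Xperm)
    (hXpermDist : IdentDistrib Xperm (fun ω => X ω j₂) μ μ)
    (hXpermIndep : IndepFun Xperm (fun ω => (X ω, Y ω)) μ) :
    -- the two candidate regression functions
    let m : (Fin p → ℝ) → ℝ := fun x =>
      (Set.Icc (0.3 : ℝ) 0.7).indicator (fun _ => (1 : ℝ)) (x j₁);
    let mt : (Fin p → ℝ) → ℝ := fun x =>
      (Set.Ici (0.3 : ℝ)).indicator (fun _ => (1 : ℝ)) (x j₁)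
        - (Set.Ioi (0.7 : ℝ)).indicator (fun _ => (1 : ℝ)) (x j₂);
    -- m(X) and m̃(X) are both versions of E(Y | X), and agree almost surely
    ((μ[Y | MeasurableSpace.comap X inferInstance]) =ᵐ[μ] fun ω => m (X ω)) ∧
    ((μ[Y | MeasurableSpace.comap X inferInstance]) =ᵐ[μ] fun ω => mt (X ω)) ∧
    ((fun ω => m (X ω)) =ᵐ[μ] fun ω => mt (X ω)) ∧
    -- MDA(Y, X₂) = 0 if m is used
    ((∫ ω, (Y ω - m (Function.update (X ω) j₂ (Xperm ω))) ^ 2 ∂μ)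
        - ∫ ω, (Y ω - m (X ω)) ^ 2 ∂μ = 0) ∧
    -- MDA(Y, X₂) = E(1_{X₁ > 0.7} − 1_{X₂° > 0.7})² > 0 if m̃ is used
    ((∫ ω, (Y ω - mt (Function.update (X ω) j₂ (Xperm ω))) ^ 2 ∂μ)
        - ∫ ω, (Y ω - mt (X ω)) ^ 2 ∂μ =
      ∫ ω, ((Set.Ioi (0.7 : ℝ)).indicator (fun _ => (1 : ℝ)) (X ω j₁)
          - (Set.Ioi (0.7 : ℝ)).indicator (fun _ => (1 : ℝ)) (Xperm ω)) ^ 2 ∂μ) ∧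
    (0 < ∫ ω, ((Set.Ioi (0.7 : ℝ)).indicator (fun _ => (1 : ℝ)) (X ω j₁)
          - (Set.Ioi (0.7 : ℝ)).indicator (fun _ => (1 : ℝ)) (Xperm ω)) ^ 2 ∂μ) := by
  intro m mt
  have hj : j₁ ≠ j₂ := fun h => by simp [h, hj₂] at hj₁
  have hX₁ : Measurable fun ω => X ω j₁ := (measurable_pi_apply j₁).comp hX
  have hm : Measurable m :=
    (measurable_const.indicator measurableSet_Icc).comp (measurable_pi_apply j₁)
  have hIcc := indicator_Icc_eq_indicator_Ici_sub_indicator_Ioi (by norm_num : (0.3 : ℝ) ≤ 0.7)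
    fun _ => (1 : ℝ)
  have hY : Y = fun ω => m (X ω) + ε ω := funext hYdef
  have hiff := ae_lt_iff_lt_of_map_cond_eq_pi_uniform hX (by norm_num) h2 h3 j₂
  have hmeq : (fun ω => m (X ω)) =ᵐ[μ] fun ω => mt (X ω) := by
    filter_upwards [hiff] with ω hω
    simp only [m, mt, hIcc, Pi.sub_apply]
    simp only [indicator_apply, mem_Ioi, hω]
  have hcond : μ[Y | MeasurableSpace.comap X inferInstance] =ᵐ[μ] fun ω => m (X ω) := by
    have hmX : Integrable (fun ω => m (X ω)) μ := Integrable.of_bound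
      (hm.comp hX).aestronglyMeasurable 1 (ae_of_all _ fun _ => norm_indicator_one_le _ _)
    simpa [hY, hεmean] using condExp_comap_add_of_indepFun hX hm hmX hε hεint hεindep
  have hX₁ε : IndepFun (fun ω => X ω j₁) ε μ :=
    (hεindep.comp measurable_id (measurable_pi_apply j₁)).symm
  have hXpermε : IndepFun Xperm ε μ := by
    have hε_eq : ((Prod.snd - m ∘ Prod.fst) ∘ fun ω => (X ω, Y ω)) = ε := by
      funext ω
      simp [hYdef, m]
    rw [← hε_eq]
    exact hXpermIndep.comp measurable_id (measurable_snd.sub (hm.comp measurable_fst))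
  have hmda : ∫ ω, (Y ω - mt (Function.update (X ω) j₂ (Xperm ω))) ^ 2 ∂μ
      - ∫ ω, (Y ω - mt (X ω)) ^ 2 ∂μ =
      ∫ ω, ((Ioi (0.7 : ℝ)).indicator (fun _ => (1 : ℝ)) (X ω j₁)
        - (Ioi (0.7 : ℝ)).indicator (fun _ => (1 : ℝ)) (Xperm ω)) ^ 2 ∂μ := by
    have hupd : ∀ ω, Y ω - mt (Function.update (X ω) j₂ (Xperm ω)) =
        ε ω - ((Ioi (0.7 : ℝ)).indicator (fun _ => (1 : ℝ)) (X ω j₁)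
          - (Ioi (0.7 : ℝ)).indicator (fun _ => (1 : ℝ)) (Xperm ω)) := fun ω => by
      simp only [hYdef, mt, Function.update_of_ne hj, Function.update_self, hIcc, Pi.sub_apply]
      ring
    have hres : (fun ω => (Y ω - mt (X ω)) ^ 2) =ᵐ[μ] fun ω => ε ω ^ 2 := by
      filter_upwards [hmeq] with ω h
      rw [← h, hY, add_sub_cancel_left]
    simp only [hupd, integral_congr_ae hres]
    rw [integral_sub_sq_indicator_sub_indicator_of_indepFun measurableSet_Ioi hεint hεint2
      hεmean hX₁ hXperm hX₁ε hXpermε, add_sub_cancel_left]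
  refine ⟨hcond, hcond.trans hmeq, hmeq, by simp only [m, Function.update_of_ne hj, sub_self],
    hmda, ?_⟩
  refine integral_sq_indicator_sub_indicator_pos hX₁ hXperm
    (hXpermIndep.comp measurable_id ((measurable_pi_apply j₁).comp measurable_fst)).symm
    measurableSet_Ioi ?_ ?_
  · exact measure_preimage_ne_zero_of_map_eq_restrict_Icc hX₁ h1 measurableSet_Ioi
      (by norm_num : (0.7 : ℝ) < 1) (by norm_num) le_rfl Ioo_subset_Ioi_self
  · have hX₂ : (fun ω => X ω j₂) ⁻¹' Iic 0.7 =ᵐ[μ] (fun ω => X ω j₁) ⁻¹' Iic 0.7 :=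
      eventuallyEq_set.2 <| hiff.mono fun ω hω => by
        simp only [mem_preimage, mem_Iic, ← not_lt, hω]
    rw [compl_Ioi, hXpermDist.measure_mem_eq measurableSet_Iic, measure_congr hX₂]
    exact measure_preimage_ne_zero_of_map_eq_restrict_Icc hX₁ h1 measurableSet_Iic
      (by norm_num : (0 : ℝ) < 0.7) le_rfl (by norm_num)
      (Ioo_subset_Iio_self.trans Iio_subset_Iic_self)
end

section
/- For any square-integrable response Y and feature vector X = (X₁, …, X_p) such that Xⱼ is a null feature (i.e. Xⱼ is conditionally independent of Y given X₋ⱼ), the conditional permutation importance is exactly zero: CPI(Y, Xⱼ) = 0. In particular, m(X_{(j)}†) = m(X) almost surely in that case. -/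
/-!
Given `X₋ⱼ`, the null feature `Xⱼ` carries no information on `Y`, so
`E(Y | X) = E(Y | X₋ⱼ) = φ(X₋ⱼ)` almost surely for a measurable `φ`; that is, `m x = φ x₋ⱼ` for
almost every `x` under the law of `X`. Since `Xⱼ†` has the same conditional law as `Xⱼ` given
`X₋ⱼ`, the vector `X_{(j)}†` has the same law as `X`, so the identity also holds at `X_{(j)}†`,
whose coordinates other than `j` are those of `X`. Hence `m(X_{(j)}†) = φ(X₋ⱼ) = m(X)` almost
surely, and the two mean squared errors coincide.
-/

open MeasureTheory ProbabilityTheory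

theorem MeasurableSpace.comap_eq_of_comp {Ω α β : Type*} [mα : MeasurableSpace α]
    [mβ : MeasurableSpace β] {f : Ω → α} {g : Ω → β} {a : β → α} {b : α → β}
    (ha : Measurable a) (hb : Measurable b) (hf : f = a ∘ g) (hg : g = b ∘ f) :
    mα.comap f = mβ.comap g := by
  refine le_antisymm ?_ ?_
  · rw [hf, ← MeasurableSpace.comap_comp]
    exact MeasurableSpace.comap_mono ha.comap_le
  · rw [hg, ← MeasurableSpace.comap_comp]
    exact MeasurableSpace.comap_mono hb.comap_le

theorem MeasureTheory.ae_eq_comp_of_map_eq {Ω α δ : Type*} {mΩ : MeasurableSpace Ω}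
    [MeasurableSpace α] [MeasurableSpace δ] [MeasurableEq δ] {μ : Measure Ω}
    {V W : Ω → α} {F G : α → δ} (hV : AEMeasurable V μ) (hW : AEMeasurable W μ)
    (hF : Measurable F) (hG : Measurable G) (hmap : μ.map V = μ.map W)
    (h : F ∘ W =ᵐ[μ] G ∘ W) : F ∘ V =ᵐ[μ] G ∘ V := by
  refine ae_eq_comp hV ?_
  rw [hmap]
  exact (ae_map_iff hW (measurableSet_eq_fun hF hG)).2 h

namespace ProbabilityTheory

variable {Ω γ β : Type*} {mΩ : MeasurableSpace Ω} [MeasurableSpace γ] [MeasurableSpace β]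
  {μ : Measure Ω} [IsFiniteMeasure μ] {k : Ω → γ}

theorem condExp_prodMk_ae_eq_integral_condDistrib_of_condIndepFun [StandardBorelSpace Ω]
    [StandardBorelSpace β] [Nonempty β] {g : Ω → β} {Y : Ω → ℝ}
    (hk : Measurable k) (hg : Measurable g) (hY : Measurable Y) (hY_int : Integrable Y μ)
    (hind : g ⟂ᵢ[k, hk; μ] Y) :
    μ[Y | MeasurableSpace.comap (fun ω ↦ (k ω, g ω)) inferInstance]
      =ᵐ[μ] fun ω ↦ ∫ y, y ∂condDistrib Y k μ (k ω) := by
  have hkg : Measurable fun ω ↦ (k ω, g ω) := hk.prodMk hg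
  have hker := ae_of_ae_map hkg.aemeasurable
    ((condIndepFun_iff_condDistrib_prod_ae_eq_prodMkRight hY hg hk).1 hind)
  filter_upwards [condExp_ae_eq_integral_condDistrib' hkg hY_int, hker] with ω hω hκ
  rw [hω, hκ, Kernel.prodMkRight_apply]

theorem map_prodMk_eq_of_condDistrib_ae_eq [StandardBorelSpace β] [Nonempty β] {A B : Ω → β}
    (hA : AEMeasurable A μ) (hB : AEMeasurable B μ)
    (h : condDistrib A k μ =ᵐ[μ.map k] condDistrib B k μ) :
    μ.map (fun ω ↦ (k ω, A ω)) = μ.map (fun ω ↦ (k ω, B ω)) := by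
  rw [(condDistrib_ae_eq_iff_measure_eq_compProd k hA _).1 h, compProd_map_condDistrib hB]

end ProbabilityTheory

section InsertCoord

variable {ι β : Type*} [DecidableEq ι]

def insertCoord (j : ι) (q : ({k // k ≠ j} → β) × β) : ι → β :=
  fun k ↦ if h : k = j then q.2 else q.1 ⟨k, h⟩

theorem measurable_insertCoord [MeasurableSpace β] (j : ι) :
    Measurable (insertCoord (β := β) j) := by
  refine measurable_pi_lambda _ fun k ↦ ?_
  by_cases h : k = j
  · simp only [insertCoord, dif_pos h]
    fun_prop
  · simp only [insertCoord, dif_neg h]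
    fun_prop

theorem insertCoord_restrict (j : ι) (v : ι → β) (x : β) :
    insertCoord j (fun k : {k // k ≠ j} ↦ v k, x) = Function.update v j x := by
  ext k
  by_cases h : k = j
  · subst h
    simp [insertCoord]
  · simp [insertCoord, h]

end InsertCoord

theorem stmt_10_general
    (Ω : Type) [MeasurableSpace Ω] [StandardBorelSpace Ω]
    (μ : Measure Ω) [IsProbabilityMeasure μ]
    (p : ℕ) (j : Fin p) (X : Ω → Fin p → ℝ) (Y : Ω → ℝ)
    (hX : Measurable X) (hY : Measurable Y)
    (hY2 : Integrable (fun ω => (Y ω) ^ 2) μ)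
    (hXmj : Measurable (fun ω (k : {k : Fin p // k ≠ j}) => X ω k.1))
    -- Xⱼ is a null feature
    (hnull : CondIndepFun
      (MeasurableSpace.comap (fun ω (k : {k : Fin p // k ≠ j}) => X ω k.1) inferInstance)
      hXmj.comap_le (fun ω => X ω j) Y μ)
    -- m is a version of the conditional mean E(Y | X)
    (m : (Fin p → ℝ) → ℝ) (hm : Measurable m)
    (hver : (μ[Y | MeasurableSpace.comap X inferInstance]) =ᵐ[μ] fun ω => m (X ω))
    -- the conditionally permuted feature Xⱼ†
    (Xdag : Ω → ℝ) (hXdag : Measurable Xdag)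
    -- given X₋ⱼ, Xⱼ† has the same conditional distribution as Xⱼ
    (hdist : ∀ᵐ v ∂(Measure.map (fun ω (k : {k : Fin p // k ≠ j}) => X ω k.1) μ),
      condDistrib Xdag (fun ω (k : {k : Fin p // k ≠ j}) => X ω k.1) μ v =
        condDistrib (fun ω => X ω j) (fun ω (k : {k : Fin p // k ≠ j}) => X ω k.1) μ v) :
    ((∫ ω, (Y ω - m (Function.update (X ω) j (Xdag ω))) ^ 2 ∂μ)
        - ∫ ω, (Y ω - m (X ω)) ^ 2 ∂μ = 0) ∧
      ((fun ω => m (Function.update (X ω) j (Xdag ω))) =ᵐ[μ] fun ω => m (X ω)) := by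
  set Z := fun ω (k : {k : Fin p // k ≠ j}) => X ω k.1
  have hXj : Measurable fun ω => X ω j := (measurable_pi_apply j).comp hX
  have hY_int : Integrable Y μ :=
    ((memLp_two_iff_integrable_sq hY.aestronglyMeasurable).2 hY2).integrable one_le_two
  have hcomap : MeasurableSpace.comap X inferInstance
      = MeasurableSpace.comap (fun ω => (Z ω, X ω j)) inferInstance :=
    MeasurableSpace.comap_eq_of_comp (measurable_insertCoord j)
      (b := fun v => (fun k : {k : Fin p // k ≠ j} => v k.1, v j)) (by fun_prop)
      (funext fun ω => by simp [insertCoord_restrict, Z]) rfl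
  set φ := fun z => ∫ y, y ∂condDistrib Y Z μ z
  have hφ : Measurable φ := stronglyMeasurable_id.integral_kernel.measurable
  have hmX : (fun ω => m (X ω)) =ᵐ[μ] fun ω => φ (Z ω) :=
    hver.symm.trans (hcomap ▸
      condExp_prodMk_ae_eq_integral_condDistrib_of_condIndepFun hXmj hXj hY hY_int hnull)
  have hlaw : μ.map (fun ω => (Z ω, Xdag ω)) = μ.map (fun ω => (Z ω, X ω j)) :=
    map_prodMk_eq_of_condDistrib_ae_eq hXdag.aemeasurable hXj.aemeasurable hdist
  have hsame : (fun ω => m (Function.update (X ω) j (Xdag ω))) =ᵐ[μ] fun ω => m (X ω) := by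
    have h := ae_eq_comp_of_map_eq (hXmj.prodMk hXdag).aemeasurable
      (hXmj.prodMk hXj).aemeasurable (hm.comp (measurable_insertCoord j)) (hφ.comp measurable_fst)
      hlaw (by simpa [Function.comp_def, insertCoord_restrict, Z] using hmX)
    simp only [Function.comp_def, insertCoord_restrict, Z] at h
    exact h.trans hmX.symm
  refine ⟨sub_eq_zero.2 (integral_congr_ae ?_), hsame⟩
  filter_upwards [hsame] with ω hω
  rw [hω]

/-- **Proposition 4 (CPI vanishes on null features).**  For any square-integrable response `Y`
and feature vector `X` such that `Xⱼ` is a null feature (conditionally independent of `Y` given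
`X₋ⱼ`), the conditional permutation importance is exactly zero:
`CPI(Y, Xⱼ) = E(Y − m(X_{(j)}†))² − E(Y − m(X))² = 0`;  in particular
`m(X_{(j)}†) = m(X)` almost surely.  Here `m` is a version of `E(Y | X)` and, given `X₋ⱼ`, the
permuted feature `Xⱼ†` has the same conditional distribution as `Xⱼ` and is conditionally
independent of both `Y` and `Xⱼ`. -/
theorem stmt_10
    (Ω : Type) [MeasurableSpace Ω] [StandardBorelSpace Ω] [Nonempty Ω]
    (μ : Measure Ω) [IsProbabilityMeasure μ]
    (p : ℕ) (j : Fin p) (X : Ω → Fin p → ℝ) (Y : Ω → ℝ)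
    (hX : Measurable X) (hY : Measurable Y)
    (hXrange : ∀ ω k, X ω k ∈ Set.Icc (0 : ℝ) 1)
    (hY2 : Integrable (fun ω => (Y ω) ^ 2) μ)
    (hXmj : Measurable (fun ω (k : {k : Fin p // k ≠ j}) => X ω k.1))
    -- Xⱼ is a null feature
    (hnull : CondIndepFun
      (MeasurableSpace.comap (fun ω (k : {k : Fin p // k ≠ j}) => X ω k.1) inferInstance)
      hXmj.comap_le (fun ω => X ω j) Y μ)
    -- m is a version of the conditional mean E(Y | X)
    (m : (Fin p → ℝ) → ℝ) (hm : Measurable m)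
    (hver : (μ[Y | MeasurableSpace.comap X inferInstance]) =ᵐ[μ] fun ω => m (X ω))
    -- the conditionally permuted feature Xⱼ†
    (Xdag : Ω → ℝ) (hXdag : Measurable Xdag)
    -- given X₋ⱼ, Xⱼ† has the same conditional distribution as Xⱼ
    (hdist : ∀ᵐ v ∂(Measure.map (fun ω (k : {k : Fin p // k ≠ j}) => X ω k.1) μ),
      condDistrib Xdag (fun ω (k : {k : Fin p // k ≠ j}) => X ω k.1) μ v =
        condDistrib (fun ω => X ω j) (fun ω (k : {k : Fin p // k ≠ j}) => X ω k.1) μ v)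
    -- given X₋ⱼ, Xⱼ† is conditionally independent of both Y and Xⱼ
    (hcind : CondIndepFun
      (MeasurableSpace.comap (fun ω (k : {k : Fin p // k ≠ j}) => X ω k.1) inferInstance)
      hXmj.comap_le Xdag (fun ω => (Y ω, X ω j)) μ) :
    ((∫ ω, (Y ω - m (Function.update (X ω) j (Xdag ω))) ^ 2 ∂μ)
        - ∫ ω, (Y ω - m (X ω)) ^ 2 ∂μ = 0) ∧
      ((fun ω => m (Function.update (X ω) j (Xdag ω))) =ᵐ[μ] fun ω => m (X ω)) :=
  stmt_10_general Ω μ p j X Y hX hY hY2 hXmj hnull m hm hver Xdag hXdag hdist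
end

section
/- Suppose g : [0,1] → [0,1] is measurable, E Y² < ∞, and Var(g(Xⱼ) | X₋ⱼ) ≥ ς₁ and Var(Y | X) ≥ ς₂ almost surely for some constants ς₁, ς₂ > 0. Then: (i) Var{[Y − E(Y | X₋ⱼ)][g(Xⱼ) − E g(Xⱼ)]} ≥ ς₂·ς₁²/4; (ii) Var{[Y − E(Y | X₋ⱼ)][g(Xⱼ) − E(g(Xⱼ) | X₋ⱼ)]} ≥ ς₂·ς₁²/4; (iii) Var{[Y − E(Y | X₋ⱼ)][g(Xⱼ) − E g(Xⱼ)]} ≤ E Y²; and (iv) Var{[Y − E(Y | X₋ⱼ)][g(Xⱼ) − E(g(Xⱼ) | X₋ⱼ)]} ≤ E Y². -/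
/-!
Write `Z = Y - E(Y | X₋ⱼ)` and let `W` be either centring of `g(Xⱼ)`: it is `σ(X)`-measurable
with `|W| ≤ 1`. Since `E(Y | X₋ⱼ)` is `σ(X)`-measurable, the law of total variance gives
`Var(Z W) ≥ E Var(Z W | X) = E[W² Var(Y | X)] ≥ ς₂ E W²`. Both centrings have
`E W² ≥ E Var(g(Xⱼ) | X₋ⱼ) ≥ ς₁`, and Popoviciu's inequality `Var g(Xⱼ) ≤ 1/4` forces `ς₁ ≤ 1/4`,
so `ς₂ ς₁ ≥ ς₂ ς₁² / 4`. The upper bound is `Var(Z W) ≤ E Z² ≤ Var Y ≤ E Y²`.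
-/

open MeasureTheory ProbabilityTheory

namespace ProbabilityTheory

variable {Ω : Type*} {m m₀ : MeasurableSpace Ω} {μ : Measure[m₀] Ω}

lemma condExp_mem_Icc (hm : m ≤ m₀) [IsFiniteMeasure μ] {f : Ω → ℝ} {a b : ℝ}
    (hf : Integrable f μ) (hab : ∀ᵐ ω ∂μ, f ω ∈ Set.Icc a b) :
    ∀ᵐ ω ∂μ, (μ[f | m]) ω ∈ Set.Icc a b := by
  have ha := condExp_mono (m := m) (integrable_const a) hf (hab.mono fun _ h => h.1)
  have hb := condExp_mono (m := m) hf (integrable_const b) (hab.mono fun _ h => h.2)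
  rw [condExp_const hm] at ha hb
  filter_upwards [ha, hb] with ω ha hb using ⟨ha, hb⟩

lemma abs_sub_integral_le_one [IsProbabilityMeasure μ] {f : Ω → ℝ} (hf : Integrable f μ)
    (hf01 : ∀ ω, f ω ∈ Set.Icc (0 : ℝ) 1) (ω : Ω) : |f ω - ∫ ω', f ω' ∂μ| ≤ 1 := by
  simpa [Real.dist_eq] using Real.dist_le_of_mem_Icc_01 (hf01 ω)
    ((convex_Icc 0 1).integral_mem isClosed_Icc (ae_of_all _ hf01) hf)

lemma abs_sub_condExp_le_one (hm : m ≤ m₀) [IsFiniteMeasure μ] {f : Ω → ℝ}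
    (hf : Integrable f μ) (hf01 : ∀ ω, f ω ∈ Set.Icc (0 : ℝ) 1) :
    ∀ᵐ ω ∂μ, |f ω - (μ[f | m]) ω| ≤ 1 := by
  filter_upwards [condExp_mem_Icc hm hf (ae_of_all _ hf01)] with ω h
  simpa [Real.dist_eq] using Real.dist_le_of_mem_Icc_01 (hf01 ω) h

lemma condVar_sub_of_stronglyMeasurable (hm : m ≤ m₀) [IsFiniteMeasure μ] {X a : Ω → ℝ}
    (ha : StronglyMeasurable[m] a) (hX : Integrable X μ) (ha_int : Integrable a μ) :
    Var[X - a; μ | m] =ᵐ[μ] Var[X; μ | m] := by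
  refine condExp_congr_ae ?_
  filter_upwards [condExp_sub hX ha_int m] with ω hω
  simp [hω, condExp_of_stronglyMeasurable hm ha ha_int]

lemma condVar_mul_of_stronglyMeasurable_right (hm : m ≤ m₀) [IsFiniteMeasure μ] {X W : Ω → ℝ}
    {C : ℝ} (hW : StronglyMeasurable[m] W) (hWC : ∀ᵐ ω ∂μ, |W ω| ≤ C) (hX : MemLp X 2 μ) :
    Var[X * W; μ | m] =ᵐ[μ] Var[X; μ | m] * W ^ 2 := by
  have hW₀ : AEStronglyMeasurable W μ := (hW.mono hm).aestronglyMeasurable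
  have hW2C : ∀ᵐ ω ∂μ, ‖(W ^ 2) ω‖ ≤ C ^ 2 := hWC.mono fun ω h => by
    simpa [sq_abs] using pow_le_pow_left₀ (abs_nonneg (W ω)) h 2
  have hdev : Integrable ((X - μ[X | m]) ^ 2) μ :=
    (hX.sub (hX.condExp one_le_two)).integrable_sq
  have hXW : μ[X * W | m] =ᵐ[μ] μ[X | m] * W :=
    condExp_mul_of_stronglyMeasurable_right hW
      ((hX.integrable one_le_two).mul_bdd hW₀ (by simpa using hWC)) (hX.integrable one_le_two)
  calc Var[X * W; μ | m]
      =ᵐ[μ] μ[(X - μ[X | m]) ^ 2 * W ^ 2 | m] := by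
        refine condExp_congr_ae ?_
        filter_upwards [hXW] with ω hω
        simp only [Pi.pow_apply, Pi.sub_apply, Pi.mul_apply, hω]
        ring
    _ =ᵐ[μ] Var[X; μ | m] * W ^ 2 :=
        condExp_mul_of_stronglyMeasurable_right (hW.pow 2)
          (hdev.mul_bdd (hW₀.pow 2) hW2C) hdev

lemma integral_condVar_le_variance (hm : m ≤ m₀) [IsProbabilityMeasure μ] {X : Ω → ℝ}
    (hX : MemLp X 2 μ) : μ[Var[X; μ | m]] ≤ Var[X; μ] := by
  rw [← integral_condVar_add_variance_condExp hm hX]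
  exact le_add_of_nonneg_right (variance_nonneg _ _)

lemma le_integral_sub_condExp_sq (hm : m ≤ m₀) [IsProbabilityMeasure μ] {X : Ω → ℝ} {ς : ℝ}
    (hς : ∀ᵐ ω ∂μ, ς ≤ Var[X; μ | m] ω) : ς ≤ ∫ ω, (X ω - (μ[X | m]) ω) ^ 2 ∂μ :=
  calc ς = ∫ _, ς ∂μ := by simp
    _ ≤ ∫ ω, Var[X; μ | m] ω ∂μ := integral_mono_ae (integrable_const _) integrable_condVar hς
    _ = ∫ ω, (X ω - (μ[X | m]) ω) ^ 2 ∂μ := integral_condExp hm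

lemma integral_sub_condExp_sq_le_variance (hm : m ≤ m₀) [IsProbabilityMeasure μ] {X : Ω → ℝ}
    (hX : MemLp X 2 μ) : ∫ ω, (X ω - (μ[X | m]) ω) ^ 2 ∂μ ≤ Var[X; μ] :=
  (integral_condExp hm).symm.trans_le (integral_condVar_le_variance hm hX)

lemma mul_integral_sq_le_variance_sub_condExp_mul {m₁ m₂ : MeasurableSpace Ω} (hm₁₂ : m₁ ≤ m₂)
    (hm₂ : m₂ ≤ m₀) [IsProbabilityMeasure μ] {Y W : Ω → ℝ} {C ς : ℝ} (hY : MemLp Y 2 μ)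
    (hW : StronglyMeasurable[m₂] W) (hWC : ∀ᵐ ω ∂μ, |W ω| ≤ C)
    (hς : ∀ᵐ ω ∂μ, ς ≤ Var[Y; μ | m₂] ω) :
    ς * ∫ ω, W ω ^ 2 ∂μ ≤ Var[fun ω => (Y ω - (μ[Y | m₁]) ω) * W ω; μ] := by
  have hW₀ : AEStronglyMeasurable[m₀] W μ := (hW.mono hm₂).aestronglyMeasurable
  have hW_top : MemLp W ⊤ μ := memLp_top_of_bound hW₀ C (by simpa using hWC)
  have hW_sq : Integrable (fun ω => W ω ^ 2) μ := (hW_top.mono_exponent le_top).integrable_sq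
  have hW2C : ∀ᵐ ω ∂μ, ‖W ω ^ 2‖ ≤ C ^ 2 := hWC.mono fun ω h => by
    simpa [sq_abs] using pow_le_pow_left₀ (abs_nonneg (W ω)) h 2
  have ha : StronglyMeasurable[m₂] (μ[Y | m₁]) := stronglyMeasurable_condExp.mono hm₁₂
  have hZ : MemLp (Y - μ[Y | m₁]) 2 μ := hY.sub (hY.condExp one_le_two)
  calc ς * ∫ ω, W ω ^ 2 ∂μ
      = ∫ ω, ς * W ω ^ 2 ∂μ := (integral_const_mul _ _).symm
    _ ≤ ∫ ω, Var[Y; μ | m₂] ω * W ω ^ 2 ∂μ :=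
        integral_mono_ae (hW_sq.const_mul ς) (integrable_condVar.mul_bdd (hW₀.pow 2) hW2C)
          (hς.mono fun ω h => mul_le_mul_of_nonneg_right h (sq_nonneg _))
    _ = ∫ ω, Var[(Y - μ[Y | m₁]) * W; μ | m₂] ω ∂μ := by
        refine integral_congr_ae ?_
        filter_upwards [condVar_mul_of_stronglyMeasurable_right hm₂ hW hWC hZ,
          condVar_sub_of_stronglyMeasurable hm₂ ha (hY.integrable one_le_two) integrable_condExp]
          with ω hmul hsub
        simp [hmul, hsub]
    _ ≤ Var[fun ω => (Y ω - (μ[Y | m₁]) ω) * W ω; μ] :=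
        integral_condVar_le_variance hm₂ (hW_top.mul' hZ)

lemma variance_sub_condExp_mul_le (hm : m ≤ m₀) [IsProbabilityMeasure μ] {Y W : Ω → ℝ}
    (hY : MemLp Y 2 μ) (hW : AEStronglyMeasurable W μ) (hW₁ : ∀ᵐ ω ∂μ, |W ω| ≤ 1) :
    Var[fun ω => (Y ω - (μ[Y | m]) ω) * W ω; μ] ≤ ∫ ω, Y ω ^ 2 ∂μ := by
  have hZ : MemLp (Y - μ[Y | m]) 2 μ := hY.sub (hY.condExp one_le_two)
  have hZW : MemLp (fun ω => (Y ω - (μ[Y | m]) ω) * W ω) 2 μ :=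
    (memLp_top_of_bound hW 1 (by simpa using hW₁)).mul' hZ
  calc Var[fun ω => (Y ω - (μ[Y | m]) ω) * W ω; μ]
      ≤ ∫ ω, ((Y ω - (μ[Y | m]) ω) * W ω) ^ 2 ∂μ := variance_le_expectation_sq hZW.1
    _ ≤ ∫ ω, (Y ω - (μ[Y | m]) ω) ^ 2 ∂μ := by
        refine integral_mono_ae hZW.integrable_sq hZ.integrable_sq (hW₁.mono fun ω h => ?_)
        dsimp only
        rw [mul_pow]
        exact mul_le_of_le_one_right (sq_nonneg _)
          (by simpa [sq_abs] using pow_le_one₀ (n := 2) (abs_nonneg _) h)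
    _ ≤ ∫ ω, Y ω ^ 2 ∂μ :=
        (integral_sub_condExp_sq_le_variance hm hY).trans (variance_le_expectation_sq hY.1)

lemma variance_sub_condExp_mul_mem_Icc {m₁ m₂ : MeasurableSpace Ω} (hm₁₂ : m₁ ≤ m₂)
    (hm₂ : m₂ ≤ m₀) [IsProbabilityMeasure μ] {Y W : Ω → ℝ} {ς : ℝ} (hY : MemLp Y 2 μ)
    (hW : StronglyMeasurable[m₂] W) (hW₁ : ∀ᵐ ω ∂μ, |W ω| ≤ 1)
    (hς : ∀ᵐ ω ∂μ, ς ≤ Var[Y; μ | m₂] ω) :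
    Var[fun ω => (Y ω - (μ[Y | m₁]) ω) * W ω; μ] ∈
      Set.Icc (ς * ∫ ω, W ω ^ 2 ∂μ) (∫ ω, Y ω ^ 2 ∂μ) :=
  ⟨mul_integral_sq_le_variance_sub_condExp_mul hm₁₂ hm₂ hY hW hW₁ hς,
    variance_sub_condExp_mul_le (hm₁₂.trans hm₂) hY (hW.mono hm₂).aestronglyMeasurable hW₁⟩

end ProbabilityTheory

/-- **Lemma (lower and upper variance bounds).**  Suppose `g : [0,1] → [0,1]` is measurable,
`E Y² < ∞`, and `Var(g(Xⱼ) | X₋ⱼ) ≥ ς₁`, `Var(Y | X) ≥ ς₂` almost surely for some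
`ς₁, ς₂ > 0`.  Then
(i)  `Var{[Y − E(Y|X₋ⱼ)][g(Xⱼ) − E g(Xⱼ)]} ≥ ς₂ ς₁² / 4`;
(ii) `Var{[Y − E(Y|X₋ⱼ)][g(Xⱼ) − E(g(Xⱼ)|X₋ⱼ)]} ≥ ς₂ ς₁² / 4`;
(iii) `Var{[Y − E(Y|X₋ⱼ)][g(Xⱼ) − E g(Xⱼ)]} ≤ E Y²`;
(iv)  `Var{[Y − E(Y|X₋ⱼ)][g(Xⱼ) − E(g(Xⱼ)|X₋ⱼ)]} ≤ E Y²`. -/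
theorem stmt_13
    (Ω : Type) [MeasurableSpace Ω]
    (μ : Measure Ω) [IsProbabilityMeasure μ]
    (p : ℕ) (j : Fin p) (X : Ω → Fin p → ℝ) (Y : Ω → ℝ)
    (hX : Measurable X) (hY : Measurable Y)
    (hXrange : ∀ ω k, X ω k ∈ Set.Icc (0 : ℝ) 1)
    (g : ℝ → ℝ) (hg : Measurable g)
    (hgrange : ∀ x ∈ Set.Icc (0 : ℝ) 1, g x ∈ Set.Icc (0 : ℝ) 1)
    (hY2 : Integrable (fun ω => (Y ω) ^ 2) μ)
    (ς₁ ς₂ : ℝ) (hς₁pos : 0 < ς₁) (hς₂pos : 0 < ς₂)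
    -- Var(g(Xⱼ) | X₋ⱼ) ≥ ς₁ almost surely
    (hς₁ : ∀ᵐ ω ∂μ, ς₁ ≤
      (μ[fun ω' => (g (X ω' j)
          - (μ[fun ω'' => g (X ω'' j)
              | MeasurableSpace.comap (fun ω₀ (k : {k : Fin p // k ≠ j}) => X ω₀ k.1)
                  inferInstance]) ω') ^ 2
        | MeasurableSpace.comap (fun ω₀ (k : {k : Fin p // k ≠ j}) => X ω₀ k.1)
            inferInstance]) ω)
    -- Var(Y | X) ≥ ς₂ almost surely
    (hς₂ : ∀ᵐ ω ∂μ, ς₂ ≤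
      (μ[fun ω' => (Y ω' - (μ[Y | MeasurableSpace.comap X inferInstance]) ω') ^ 2
        | MeasurableSpace.comap X inferInstance]) ω) :
    (ς₂ * ς₁ ^ 2 / 4 ≤
      variance (fun ω =>
        (Y ω - (μ[Y | MeasurableSpace.comap
            (fun ω₀ (k : {k : Fin p // k ≠ j}) => X ω₀ k.1) inferInstance]) ω)
        * (g (X ω j) - ∫ ω', g (X ω' j) ∂μ)) μ) ∧
    (ς₂ * ς₁ ^ 2 / 4 ≤
      variance (fun ω =>
        (Y ω - (μ[Y | MeasurableSpace.comap
            (fun ω₀ (k : {k : Fin p // k ≠ j}) => X ω₀ k.1) inferInstance]) ω)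
        * (g (X ω j) - (μ[fun ω' => g (X ω' j) | MeasurableSpace.comap
            (fun ω₀ (k : {k : Fin p // k ≠ j}) => X ω₀ k.1) inferInstance]) ω)) μ) ∧
    (variance (fun ω =>
        (Y ω - (μ[Y | MeasurableSpace.comap
            (fun ω₀ (k : {k : Fin p // k ≠ j}) => X ω₀ k.1) inferInstance]) ω)
        * (g (X ω j) - ∫ ω', g (X ω' j) ∂μ)) μ ≤ ∫ ω, (Y ω) ^ 2 ∂μ) ∧
    (variance (fun ω =>
        (Y ω - (μ[Y | MeasurableSpace.comap
            (fun ω₀ (k : {k : Fin p // k ≠ j}) => X ω₀ k.1) inferInstance]) ω)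
        * (g (X ω j) - (μ[fun ω' => g (X ω' j) | MeasurableSpace.comap
            (fun ω₀ (k : {k : Fin p // k ≠ j}) => X ω₀ k.1) inferInstance]) ω)) μ
      ≤ ∫ ω, (Y ω) ^ 2 ∂μ) := by
  have hYL2 : MemLp Y 2 μ := (memLp_two_iff_integrable_sq hY.aestronglyMeasurable).2 hY2
  have hG : ∀ ω, g (X ω j) ∈ Set.Icc (0 : ℝ) 1 := fun ω => hgrange _ (hXrange ω j)
  have hGL2 : MemLp (fun ω => g (X ω j)) 2 μ :=
    MemLp.of_bound (hg.comp ((measurable_pi_apply j).comp hX)).aestronglyMeasurable 1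
      (ae_of_all _ fun ω => abs_le.2 ⟨by linarith [(hG ω).1], (hG ω).2⟩)
  have hGi := hGL2.integrable one_le_two
  have hm₂ := hX.comap_le
  set m₁ :=
    MeasurableSpace.comap (fun ω₀ (k : {k : Fin p // k ≠ j}) => X ω₀ k.1) inferInstance
  set m₂ := MeasurableSpace.comap X inferInstance
  have hm₁₂ : m₁ ≤ m₂ := Measurable.comap_le <|
    measurable_pi_lambda _ fun k => (measurable_pi_apply k.1).comp (comap_measurable X)
  have hG₂ : StronglyMeasurable[m₂] fun ω => g (X ω j) :=
    (hg.comp ((measurable_pi_apply j).comp (comap_measurable X))).stronglyMeasurable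
  have hm₁ : m₁ ≤ _ := hm₁₂.trans hm₂
  have hς₁_resid := le_integral_sub_condExp_sq hm₁ hς₁
  have hresid_var := integral_sub_condExp_sq_le_variance hm₁ hGL2
  have hvar_le : Var[fun ω => g (X ω j); μ] ≤ 1 / 4 :=
    (variance_le_sq_of_bounded (ae_of_all μ hG) hGL2.1.aemeasurable).trans_eq (by norm_num)
  have hς₁_le : ς₁ ≤ 1 / 4 := hς₁_resid.trans (hresid_var.trans hvar_le)
  rw [variance_eq_integral hGL2.1.aemeasurable] at hresid_var
  have hscale : ∀ I, ς₁ ≤ I → ς₂ * ς₁ ^ 2 / 4 ≤ ς₂ * I := fun I hI => by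
    nlinarith [mul_le_mul_of_nonneg_left hI hς₂pos.le, mul_pos hς₁pos hς₂pos]
  obtain ⟨hlow₁, hupp₁⟩ := variance_sub_condExp_mul_mem_Icc hm₁₂ hm₂ hYL2
    (hG₂.sub stronglyMeasurable_const) (ae_of_all _ (abs_sub_integral_le_one hGi hG)) hς₂
  obtain ⟨hlow₂, hupp₂⟩ := variance_sub_condExp_mul_mem_Icc hm₁₂ hm₂ hYL2
    (hG₂.sub (stronglyMeasurable_condExp.mono hm₁₂)) (abs_sub_condExp_le_one hm₁ hGi hG) hς₂
  exact ⟨(hscale _ (hς₁_resid.trans hresid_var)).trans hlow₁, (hscale _ hς₁_resid).trans hlow₂,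
    hupp₁, hupp₂⟩
end

section
/- Suppose Xⱼ is a null feature, Ŷ is constructed from the independent training sample and satisfies Condition 1 with rate B₁, {(Xᵢ, Yᵢ)}_{i=1}^n are i.i.d. copies of (X, Y) independent of the training sample, E Y² < ∞, and g : [0,1] → ℝ is measurable with sup_{x∈[0,1]} |g(x)| ≤ M < ∞. Then E{n^{−1/2} Σ_{i=1}^n [Yᵢ − Ŷ(X₋ᵢⱼ)][g(Xᵢⱼ) − E g(Xⱼ)]} = √n · E{[E(Y | X₋ⱼ) − Ŷ(X₋ⱼ)][g(Xⱼ) − E g(Xⱼ)]}, and its absolute value is at most 2M·√(B₁·n). -/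
open MeasureTheory ProbabilityTheory

/-!
Since `Ŷ` depends only on the training data `T`, which is independent of the inference sample,
each summand is a fixed measurable function of `(T, Xᵢ, Yᵢ)`, and `(T, Xᵢ, Yᵢ)` has the same law
as `(T, X, Y)`; so the expectation is `n / √n = √n` times the expectation of the term built from
the fresh copy `(X, Y)`. For a null feature, `Y` and `g(Xⱼ) − E g(Xⱼ)` are conditionally
independent given `X₋ⱼ`, hence `Y` may be replaced by `E(Y | X₋ⱼ)` in that expectation. The bound
follows from `|g(Xⱼ) − E g(Xⱼ)| ≤ 2M` and, by Jensen, `E|E(Y | X₋ⱼ) − Ŷ| ≤ √B₁`.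
-/

section Moments

variable {Ω : Type*} {mΩ : MeasurableSpace Ω} {μ : Measure Ω}

theorem integral_abs_le_sqrt_integral_sq [IsProbabilityMeasure μ] {f : Ω → ℝ}
    (hf : MemLp f 2 μ) : ∫ ω, |f ω| ∂μ ≤ √(∫ ω, f ω ^ 2 ∂μ) := by
  have jensen : (∫ ω, |f ω| ∂μ) ^ 2 ≤ ∫ ω, |f ω| ^ 2 ∂μ :=
    (Even.convexOn_pow even_two).map_integral_le (continuousOn_pow 2) isClosed_univ
      (ae_of_all _ fun _ => Set.mem_univ _) (hf.integrable one_le_two).abs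
      (by simpa [Function.comp_def] using hf.integrable_sq)
  simp only [sq_abs] at jensen
  exact Real.le_sqrt_of_sq_le jensen

theorem abs_integral_mul_le_of_abs_le [IsProbabilityMeasure μ] {f g : Ω → ℝ} {C : ℝ}
    (hf : MemLp f 2 μ) (hgC : ∀ᵐ ω ∂μ, |g ω| ≤ C) {B : ℝ} (hfB : ∫ ω, f ω ^ 2 ∂μ ≤ B) :
    |∫ ω, f ω * g ω ∂μ| ≤ C * √B := by
  have hC : 0 ≤ C := by
    obtain ⟨ω, hω⟩ := hgC.exists
    exact (abs_nonneg _).trans hω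
  calc |∫ ω, f ω * g ω ∂μ| ≤ ∫ ω, |f ω * g ω| ∂μ := abs_integral_le_integral_abs
    _ ≤ ∫ ω, C * |f ω| ∂μ := by
        refine integral_mono_of_nonneg (ae_of_all _ fun _ => abs_nonneg _)
          ((hf.integrable one_le_two).abs.const_mul C) ?_
        filter_upwards [hgC] with ω hω
        rw [abs_mul, mul_comm C]
        exact mul_le_mul_of_nonneg_left hω (abs_nonneg _)
    _ = C * ∫ ω, |f ω| ∂μ := integral_const_mul _ _
    _ ≤ C * √B := by
        gcongr
        exact (integral_abs_le_sqrt_integral_sq hf).trans (Real.sqrt_le_sqrt hfB)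

theorem memLp_two_of_lintegral_sq_le {f : Ω → ℝ} {B : ℝ} (hf : AEStronglyMeasurable f μ)
    (hB : ∫⁻ ω, ENNReal.ofReal (f ω ^ 2) ∂μ ≤ ENNReal.ofReal B) : MemLp f 2 μ := by
  refine (memLp_two_iff_integrable_sq hf).mpr ⟨hf.pow 2, ?_⟩
  rw [hasFiniteIntegral_iff_ofReal (ae_of_all _ fun ω => sq_nonneg (f ω))]
  exact hB.trans_lt ENNReal.ofReal_lt_top

theorem integral_sq_le_of_lintegral_sq_le {f : Ω → ℝ} {B : ℝ} (hf : AEStronglyMeasurable f μ)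
    (hB₀ : 0 ≤ B) (hB : ∫⁻ ω, ENNReal.ofReal (f ω ^ 2) ∂μ ≤ ENNReal.ofReal B) :
    ∫ ω, f ω ^ 2 ∂μ ≤ B := by
  rw [integral_eq_lintegral_of_nonneg_ae (ae_of_all _ fun ω => sq_nonneg (f ω)) (hf.pow 2)]
  exact ENNReal.toReal_le_of_le_ofReal hB₀ hB

theorem abs_sub_integral_le_two_mul [IsProbabilityMeasure μ] {f : Ω → ℝ} {M : ℝ}
    (hf : ∀ ω, |f ω| ≤ M) (ω : Ω) : |f ω - ∫ ω', f ω' ∂μ| ≤ 2 * M := by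
  have h_int : |∫ ω', f ω' ∂μ| ≤ M := by
    simpa using norm_integral_le_of_norm_le_const (μ := μ)
      (ae_of_all _ fun ω => (Real.norm_eq_abs _).trans_le (hf ω))
  calc |f ω - ∫ ω', f ω' ∂μ| ≤ |f ω| + |∫ ω', f ω' ∂μ| := abs_sub _ _
    _ ≤ 2 * M := by linarith [hf ω]

end Moments

namespace ProbabilityTheory

variable {Ω β β' : Type*} {m' mΩ : MeasurableSpace Ω} [StandardBorelSpace Ω]
  {hm' : m' ≤ mΩ} {μ : Measure Ω} [IsFiniteMeasure μ]

theorem CondIndepFun.ae_indepFun_condExpKernel {mβ : MeasurableSpace β}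
    {mβ' : MeasurableSpace β'} [MeasurableSpace.CountableOrCountablyGenerated Ω (β × β')]
    {f : Ω → β} {g : Ω → β'} (hf : Measurable f) (hg : Measurable g)
    (h : CondIndepFun m' hm' f g μ) : ∀ᵐ ω ∂μ, f ⟂ᵢ[condExpKernel μ m' ω] g := by
  have h_map := ae_of_ae_trim hm' ((condIndepFun_iff_map_prod_eq_prod_map_map hf hg).mp h)
  filter_upwards [h_map] with ω hω
  rw [indepFun_iff_map_prod_eq_prod_map_map hf.aemeasurable hg.aemeasurable,
    ← Kernel.map_apply _ (hf.prodMk hg), hω, Kernel.prod_apply, Kernel.map_apply _ hf,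
    Kernel.map_apply _ hg]

theorem CondIndepFun.condExp_mul_ae_eq {f g : Ω → ℝ} (hf : Measurable f) (hg : Measurable g)
    (h : CondIndepFun m' hm' f g μ) (hfi : Integrable f μ) (hgi : Integrable g μ)
    (hfgi : Integrable (f * g) μ) : μ[f * g | m'] =ᵐ[μ] μ[f | m'] * μ[g | m'] := by
  filter_upwards [condExp_ae_eq_integral_condExpKernel hm' hfgi,
    condExp_ae_eq_integral_condExpKernel hm' hfi, condExp_ae_eq_integral_condExpKernel hm' hgi,
    h.ae_indepFun_condExpKernel hf hg] with ω hfg_ω hf_ω hg_ω h_ω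
  rw [hfg_ω, Pi.mul_apply, hf_ω, hg_ω]
  exact h_ω.integral_mul_eq_mul_integral hf.aestronglyMeasurable hg.aestronglyMeasurable

theorem CondIndepFun.integral_mul_eq_integral_condExp_mul {f g : Ω → ℝ} {C : ℝ}
    (hf : Measurable f) (hg : Measurable g) (h : CondIndepFun m' hm' f g μ)
    (hfi : Integrable f μ) (hgC : ∀ᵐ ω ∂μ, ‖g ω‖ ≤ C) :
    ∫ ω, f ω * g ω ∂μ = ∫ ω, (μ[f | m']) ω * g ω ∂μ := by
  have hgi : Integrable g μ := (integrable_const C).mono' hg.aestronglyMeasurable hgC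
  have h_pull : μ[μ[f | m'] * g | m'] =ᵐ[μ] μ[f | m'] * μ[g | m'] :=
    condExp_mul_of_stronglyMeasurable_left stronglyMeasurable_condExp
      (integrable_condExp.mul_bdd hg.aestronglyMeasurable hgC) hgi
  have h_split := h.condExp_mul_ae_eq hf hg hfi hgi (hfi.mul_bdd hg.aestronglyMeasurable hgC)
  calc ∫ ω, f ω * g ω ∂μ = ∫ ω, (μ[f * g | m']) ω ∂μ := (integral_condExp hm').symm
    _ = ∫ ω, (μ[μ[f | m'] * g | m']) ω ∂μ := integral_congr_ae (h_split.trans h_pull.symm)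
    _ = ∫ ω, (μ[f | m']) ω * g ω ∂μ := integral_condExp hm'

theorem CondIndepFun.integral_sub_mul_eq_integral_condExp_sub_mul {f g h : Ω → ℝ} {C : ℝ}
    (hf : Measurable f) (hg : Measurable g) (hfg : CondIndepFun m' hm' f g μ)
    (hfi : Integrable f μ) (hgC : ∀ᵐ ω ∂μ, ‖g ω‖ ≤ C) (hh : Integrable (μ[f | m'] - h) μ) :
    ∫ ω, (f ω - h ω) * g ω ∂μ = ∫ ω, ((μ[f | m']) ω - h ω) * g ω ∂μ := by
  have hhi : Integrable h μ := by
    simpa only [sub_sub_cancel] using (integrable_condExp (m := m') (f := f)).sub hh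
  have hg' : AEStronglyMeasurable g μ := hg.aestronglyMeasurable
  simp_rw [sub_mul]
  rw [integral_sub (hfi.mul_bdd hg' hgC) (hhi.mul_bdd hg' hgC),
    integral_sub (integrable_condExp.mul_bdd hg' hgC) (hhi.mul_bdd hg' hgC),
    hfg.integral_mul_eq_integral_condExp_mul hf hg hfi hgC]

end ProbabilityTheory

theorem integral_sum_div_sqrt_of_identDistrib {Ω : Type*} {mΩ : MeasurableSpace Ω}
    {μ : Measure Ω} {n : ℕ} {F : Fin n → Ω → ℝ} {F₀ : Ω → ℝ}
    (hF : ∀ i, IdentDistrib (F i) F₀ μ μ) (hF₀ : Integrable F₀ μ) :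
    ∫ ω, (∑ i, F i ω) / √n ∂μ = √n * ∫ ω, F₀ ω ∂μ := by
  rw [integral_div, integral_finsetSum _ fun i _ => (hF i).integrable_iff.mpr hF₀,
    Finset.sum_congr rfl fun i _ => (hF i).integral_eq, Finset.sum_const, Finset.card_univ,
    Fintype.card_fin, nsmul_eq_mul, mul_div_right_comm, Real.div_sqrt]

theorem stmt_17_general
    (Ω : Type) [MeasurableSpace Ω] [StandardBorelSpace Ω]
    (μ : Measure Ω) [IsProbabilityMeasure μ]
    (p : ℕ) (j : Fin p) (X : Ω → Fin p → ℝ) (Y : Ω → ℝ)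
    (hX : Measurable X) (hY : Measurable Y)
    (hXrange : ∀ ω k, X ω k ∈ Set.Icc (0 : ℝ) 1)
    (hY2 : Integrable (fun ω => (Y ω) ^ 2) μ)
    (g : ℝ → ℝ) (hg : Measurable g)
    (M : ℝ) (hM : ∀ x ∈ Set.Icc (0 : ℝ) 1, |g x| ≤ M)
    (n : ℕ) (Xs : Fin n → Ω → Fin p → ℝ) (Ys : Fin n → Ω → ℝ)
    (𝒯 : Type) [m𝒯 : MeasurableSpace 𝒯] (T : Ω → 𝒯) (hT : Measurable T)
    (Yhat : 𝒯 → ({k : Fin p // k ≠ j} → ℝ) → ℝ)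
    (hYhat : Measurable (fun q : 𝒯 × ({k : Fin p // k ≠ j} → ℝ) => Yhat q.1 q.2))
    (B₁ : ℝ) (hB₁ : 0 ≤ B₁)
    (hXmj : Measurable (fun ω (k : {k : Fin p // k ≠ j}) => X ω k.1))
    -- the inference sample observations have the same distribution as (X, Y)
    (hiid : ∀ i, IdentDistrib (fun ω => (Xs i ω, Ys i ω)) (fun ω => (X ω, Y ω)) μ μ)
    -- the training data T is independent of the inference sample and of (X, Y)
    (hindepT : IndepFun T (fun ω => ((fun i : Fin n => (Xs i ω, Ys i ω)), (X ω, Y ω))) μ)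
    -- Xⱼ is a null feature
    (hnull : CondIndepFun
      (MeasurableSpace.comap (fun ω (k : {k : Fin p // k ≠ j}) => X ω k.1) inferInstance)
      hXmj.comap_le (fun ω => X ω j) Y μ)
    -- Condition 1
    (hcond1 : ∫⁻ ω, ENNReal.ofReal
        (((μ[Y | MeasurableSpace.comap
            (fun ω' (k : {k : Fin p // k ≠ j}) => X ω' k.1) inferInstance]) ω
          - Yhat (T ω) (fun k => X ω k.1)) ^ 2) ∂μ ≤ ENNReal.ofReal B₁) :
    ((∫ ω, (∑ i, (Ys i ω - Yhat (T ω) (fun k => Xs i ω k.1))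
          * (g (Xs i ω j) - ∫ ω', g (X ω' j) ∂μ)) / Real.sqrt n ∂μ) =
      Real.sqrt n * ∫ ω,
        ((μ[Y | MeasurableSpace.comap
            (fun ω' (k : {k : Fin p // k ≠ j}) => X ω' k.1) inferInstance]) ω
          - Yhat (T ω) (fun k => X ω k.1))
        * (g (X ω j) - ∫ ω', g (X ω' j) ∂μ) ∂μ) ∧
    |∫ ω, (∑ i, (Ys i ω - Yhat (T ω) (fun k => Xs i ω k.1))
        * (g (Xs i ω j) - ∫ ω', g (X ω' j) ∂μ)) / Real.sqrt n ∂μ| ≤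
      2 * M * Real.sqrt (B₁ * n) := by
  set c := ∫ ω', g (X ω' j) ∂μ
  set D : Ω → ℝ := fun ω => (μ[Y | MeasurableSpace.comap
    (fun ω' (k : {k : Fin p // k ≠ j}) => X ω' k.1) inferInstance]) ω
      - Yhat (T ω) (fun k => X ω k.1)
  have hG : ∀ ω, |g (X ω j) - c| ≤ 2 * M :=
    abs_sub_integral_le_two_mul fun ω => hM _ (hXrange ω j)
  have hG_meas : Measurable fun ω => g (X ω j) - c := by fun_prop
  have hYi : Integrable Y μ :=
    ((memLp_two_iff_integrable_sq hY.aestronglyMeasurable).mpr hY2).integrable one_le_two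
  have hD : MemLp D 2 μ := by
    refine memLp_two_of_lintegral_sq_le (Measurable.aestronglyMeasurable ?_) hcond1
    exact (stronglyMeasurable_condExp.mono hXmj.comap_le).measurable.sub
      (hYhat.comp (hT.prodMk hXmj))
  have h_null : ∫ ω, (Y ω - Yhat (T ω) (fun k => X ω k.1)) * (g (X ω j) - c) ∂μ
      = ∫ ω, D ω * (g (X ω j) - c) ∂μ :=
    (hnull.symm.comp measurable_id (hg.sub measurable_const))
      |>.integral_sub_mul_eq_integral_condExp_sub_mul hY hG_meas hYi (ae_of_all _ fun ω => hG ω)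
        (hD.integrable one_le_two)
  have h_ident : ∀ i, IdentDistrib
      (fun ω => (Ys i ω - Yhat (T ω) (fun k => Xs i ω k.1)) * (g (Xs i ω j) - c))
      (fun ω => (Y ω - Yhat (T ω) (fun k => X ω k.1)) * (g (X ω j) - c)) μ μ := by
    intro i
    have h_summand : Measurable fun q : 𝒯 × ((Fin p → ℝ) × ℝ) =>
        (q.2.2 - Yhat q.1 (fun k => q.2.1 k.1)) * (g (q.2.1 j) - c) := by
      fun_prop
    exact ((IdentDistrib.refl hT.aemeasurable).prodMk (hiid i)
      (hindepT.comp measurable_id ((measurable_pi_apply i).comp measurable_fst))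
      (hindepT.comp measurable_id measurable_snd)).comp h_summand
  have h_resid : Integrable (fun ω => Y ω - Yhat (T ω) (fun k => X ω k.1)) μ :=
    ((hYi.sub integrable_condExp).add (hD.integrable one_le_two)).congr
      (ae_of_all _ fun _ => sub_add_sub_cancel _ _ _)
  have h_sum := integral_sum_div_sqrt_of_identDistrib h_ident
    (h_resid.mul_bdd hG_meas.aestronglyMeasurable (ae_of_all _ fun ω => hG ω))
  rw [h_null] at h_sum
  refine ⟨h_sum, h_sum ▸ ?_⟩
  have h_bound := abs_integral_mul_le_of_abs_le hD (ae_of_all _ hG)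
    (integral_sq_le_of_lintegral_sq_le hD.aestronglyMeasurable hB₁ hcond1)
  calc |√n * ∫ ω, D ω * (g (X ω j) - c) ∂μ| ≤ √n * (2 * M * √B₁) := by
        rw [abs_mul, abs_of_nonneg (Real.sqrt_nonneg _)]
        gcongr
    _ = 2 * M * √(B₁ * n) := by rw [Real.sqrt_mul hB₁]; ring

/-- **Bias identity and bound for the basic FACT numerator** (equation (A.1)/(2.4) of the
paper).  Suppose `Xⱼ` is a null feature, `Ŷ` is built from the independent training sample and
satisfies Condition 1 with rate `B₁`, the inference sample consists of i.i.d. copies of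
`(X, Y)` independent of the training sample, `E Y² < ∞`, and `g` is measurable with
`sup_{x∈[0,1]} |g(x)| ≤ M`.  Then
`E{n^{-1/2} Σᵢ [Yᵢ − Ŷ(X₋ᵢⱼ)][g(Xᵢⱼ) − E g(Xⱼ)]}
  = √n · E{[E(Y|X₋ⱼ) − Ŷ(X₋ⱼ)][g(Xⱼ) − E g(Xⱼ)]}`,
and its absolute value is at most `2M √(B₁ n)`. -/
theorem stmt_17
    (Ω : Type) [MeasurableSpace Ω] [StandardBorelSpace Ω] [Nonempty Ω]
    (μ : Measure Ω) [IsProbabilityMeasure μ]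
    (p : ℕ) (j : Fin p) (X : Ω → Fin p → ℝ) (Y : Ω → ℝ)
    (hX : Measurable X) (hY : Measurable Y)
    (hXrange : ∀ ω k, X ω k ∈ Set.Icc (0 : ℝ) 1)
    (hY2 : Integrable (fun ω => (Y ω) ^ 2) μ)
    (g : ℝ → ℝ) (hg : Measurable g)
    (M : ℝ) (hM : ∀ x ∈ Set.Icc (0 : ℝ) 1, |g x| ≤ M)
    (n : ℕ) (Xs : Fin n → Ω → Fin p → ℝ) (Ys : Fin n → Ω → ℝ)
    (hXs : ∀ i, Measurable (Xs i)) (hYs : ∀ i, Measurable (Ys i))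
    (𝒯 : Type) [m𝒯 : MeasurableSpace 𝒯] (T : Ω → 𝒯) (hT : Measurable T)
    (Yhat : 𝒯 → ({k : Fin p // k ≠ j} → ℝ) → ℝ)
    (hYhat : Measurable (fun q : 𝒯 × ({k : Fin p // k ≠ j} → ℝ) => Yhat q.1 q.2))
    (B₁ : ℝ) (hB₁ : 0 ≤ B₁)
    (hXmj : Measurable (fun ω (k : {k : Fin p // k ≠ j}) => X ω k.1))
    -- the inference sample observations have the same distribution as (X, Y)
    (hiid : ∀ i, IdentDistrib (fun ω => (Xs i ω, Ys i ω)) (fun ω => (X ω, Y ω)) μ μ)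
    -- the inference sample together with the fresh copy (X, Y) is jointly independent
    (hindep : iIndepFun
      (fun i ω => Option.elim i (X ω, Y ω) (fun k => (Xs k ω, Ys k ω))) μ)
    -- the training data T is independent of the inference sample and of (X, Y)
    (hindepT : IndepFun T (fun ω => ((fun i : Fin n => (Xs i ω, Ys i ω)), (X ω, Y ω))) μ)
    -- Xⱼ is a null feature
    (hnull : CondIndepFun
      (MeasurableSpace.comap (fun ω (k : {k : Fin p // k ≠ j}) => X ω k.1) inferInstance)
      hXmj.comap_le (fun ω => X ω j) Y μ)
    -- Condition 1
    (hcond1 : ∫⁻ ω, ENNReal.ofReal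
        (((μ[Y | MeasurableSpace.comap
            (fun ω' (k : {k : Fin p // k ≠ j}) => X ω' k.1) inferInstance]) ω
          - Yhat (T ω) (fun k => X ω k.1)) ^ 2) ∂μ ≤ ENNReal.ofReal B₁) :
    ((∫ ω, (∑ i, (Ys i ω - Yhat (T ω) (fun k => Xs i ω k.1))
          * (g (Xs i ω j) - ∫ ω', g (X ω' j) ∂μ)) / Real.sqrt n ∂μ) =
      Real.sqrt n * ∫ ω,
        ((μ[Y | MeasurableSpace.comap
            (fun ω' (k : {k : Fin p // k ≠ j}) => X ω' k.1) inferInstance]) ω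
          - Yhat (T ω) (fun k => X ω k.1))
        * (g (X ω j) - ∫ ω', g (X ω' j) ∂μ) ∂μ) ∧
    |∫ ω, (∑ i, (Ys i ω - Yhat (T ω) (fun k => Xs i ω k.1))
        * (g (Xs i ω j) - ∫ ω', g (X ω' j) ∂μ)) / Real.sqrt n ∂μ| ≤
      2 * M * Real.sqrt (B₁ * n) :=
  stmt_17_general Ω μ p j X Y hX hY hXrange hY2 g hg M hM n Xs Ys 𝒯 (m𝒯 := m𝒯) T hT Yhat hYhat B₁
    hB₁ hXmj hiid hindepT hnull hcond1
end

section
/- Let n be a positive integer, let A_{l,i} be real numbers for l ∈ {1, 2, 3, 4} and i ∈ {1, …, n}, and let σ > 0 satisfy σ² ≥ |n⁻¹ Σ_{i=1}^n (A_{1,i}² − σ²)|. Define Sᵢ = A_{1,i} + A_{2,i} + A_{3,i} + A_{4,i} and let σ̂ = (n⁻¹ Σ_{i=1}^n (Sᵢ − n⁻¹ Σ_{i'=1}^n S_{i'})²)^{1/2} be the sample standard deviation of S₁, …, Sₙ. Then |σ̂ − σ| ≤ |(nσ)⁻¹ Σ_{i=1}^n (A_{1,i}² − σ²)| + Σ_{l=2}^4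 (n⁻¹ Σ_{i=1}^n A_{l,i}²)^{1/2} + |n⁻¹ Σ_{i=1}^n Sᵢ|. -/
/-!
Write `rms f = √(n⁻¹ ∑ᵢ fᵢ²)`, which is the Euclidean norm scaled by `n^{-1/2}`, hence a
seminorm, and `σ̂ = rms (S - S̄)`. Three reverse triangle inequalities give
`|σ̂ - rms S| ≤ rms S̄ = |S̄|`, `|rms S - rms A₀| ≤ rms (A₁ + A₂ + A₃) ≤ ∑ₗ rms Aₗ`, and
`|rms A₀ - σ| = |rms A₀² - σ²| / (rms A₀ + σ) ≤ |n⁻¹ ∑ᵢ (A₀ᵢ² - σ²)| / σ`.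
-/

open Finset

lemma abs_sub_le_abs_sq_sub_sq_div {x σ : ℝ} (hx : 0 ≤ x) (hσ : 0 < σ) :
    |x - σ| ≤ |x ^ 2 - σ ^ 2| / σ := by
  rw [le_div_iff₀ hσ, show x ^ 2 - σ ^ 2 = (x - σ) * (x + σ) by ring, abs_mul,
    abs_of_pos (by linarith : 0 < x + σ)]
  exact mul_le_mul_of_nonneg_left (by linarith) (abs_nonneg _)

section RootMeanSquare

variable {ι : Type*} [Fintype ι]

noncomputable def rms (f : ι → ℝ) : ℝ := √((∑ i, f i ^ 2) / Fintype.card ι)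

lemma rms_eq_norm_div (f : ι → ℝ) : rms f = ‖WithLp.toLp 2 f‖ / √(Fintype.card ι) := by
  rw [rms, EuclideanSpace.norm_eq, Real.sqrt_div' _ (Nat.cast_nonneg _)]
  simp

lemma rms_sq (f : ι → ℝ) : rms f ^ 2 = (∑ i, f i ^ 2) / Fintype.card ι :=
  Real.sq_sqrt (by positivity)

lemma rms_nonneg (f : ι → ℝ) : 0 ≤ rms f := Real.sqrt_nonneg _

lemma rms_add_le (f g : ι → ℝ) : rms (f + g) ≤ rms f + rms g := by
  simp only [rms_eq_norm_div, WithLp.toLp_add, ← add_div]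
  gcongr
  exact norm_add_le _ _

lemma abs_rms_sub_rms_le (f g : ι → ℝ) : |rms f - rms g| ≤ rms (f - g) := by
  simp only [rms_eq_norm_div, WithLp.toLp_sub, ← sub_div, abs_div,
    abs_of_nonneg (Real.sqrt_nonneg _)]
  gcongr
  exact abs_norm_sub_norm_le _ _

lemma rms_const [Nonempty ι] (c : ℝ) : rms (fun _ : ι => c) = |c| := by
  have : (Fintype.card ι : ℝ) ≠ 0 := Nat.cast_ne_zero.mpr Fintype.card_ne_zero
  rw [rms, sum_const, card_univ, nsmul_eq_mul, mul_div_cancel_left₀ _ this,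
    Real.sqrt_sq_eq_abs]

end RootMeanSquare

lemma rms_fin {n : ℕ} (f : Fin n → ℝ) : rms f = √((∑ i, f i ^ 2) / n) := by
  simp [rms]

theorem stmt_19_general (n : ℕ) (hn : 0 < n) (A : Fin 4 → Fin n → ℝ) (σ : ℝ) (hσ : 0 < σ) :
    let S : Fin n → ℝ := fun i => A 0 i + A 1 i + A 2 i + A 3 i;
    let σhat : ℝ := Real.sqrt ((∑ i, (S i - (∑ i', S i') / n) ^ 2) / n);
    |σhat - σ| ≤ |(∑ i, ((A 0 i) ^ 2 - σ ^ 2)) / (n * σ)|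
      + (Real.sqrt ((∑ i, (A 1 i) ^ 2) / n) + Real.sqrt ((∑ i, (A 2 i) ^ 2) / n)
          + Real.sqrt ((∑ i, (A 3 i) ^ 2) / n))
      + |(∑ i, S i) / n| := by
  intro S σhat
  have : Nonempty (Fin n) := ⟨⟨0, hn⟩⟩
  set mean := (∑ i, S i) / n
  have hσhat : σhat = rms (S - fun _ => mean) := by rw [rms_fin]; rfl
  have h_center : |σhat - rms S| ≤ |mean| := by
    have hdiff : (S - fun _ => mean) - S = fun _ => -mean := by ext; simp
    have h := abs_rms_sub_rms_le (S - fun _ => mean) S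
    rwa [hdiff, rms_const, abs_neg, ← hσhat] at h
  have h_noise : |rms S - rms (A 0)| ≤ rms (A 1) + rms (A 2) + rms (A 3) := by
    have hS : S - A 0 = A 1 + A 2 + A 3 := by ext i; simp only [Pi.sub_apply, Pi.add_apply, S]; ring
    calc |rms S - rms (A 0)| ≤ rms (A 1 + A 2 + A 3) := hS ▸ abs_rms_sub_rms_le _ _
      _ ≤ rms (A 1) + rms (A 2) + rms (A 3) :=
        (rms_add_le _ _).trans (add_le_add_left (rms_add_le _ _) _)
  have h_signal : |rms (A 0) - σ| ≤ |(∑ i, ((A 0 i) ^ 2 - σ ^ 2)) / (n * σ)| := by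
    have hsq : rms (A 0) ^ 2 - σ ^ 2 = (∑ i, ((A 0 i) ^ 2 - σ ^ 2)) / n := by
      rw [rms_sq, sum_sub_distrib, sum_const, card_univ, Fintype.card_fin, nsmul_eq_mul]
      field_simp
    rw [← div_div, abs_div _ σ, abs_of_pos hσ, ← hsq]
    exact abs_sub_le_abs_sq_sub_sq_div (rms_nonneg _) hσ
  simp only [← rms_fin]
  linarith [abs_sub_le σhat (rms S) σ, abs_sub_le (rms S) (rms (A 0)) σ]

/-- **A deterministic inequality for the sample standard deviation.**  Let `A_{l,i}` be real
numbers for `l ∈ {1, 2, 3, 4}`, `i ∈ {1, …, n}`, and let `σ > 0` satisfy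
`σ² ≥ |n⁻¹ Σᵢ (A_{1,i}² − σ²)|`.  With `Sᵢ = A_{1,i} + A_{2,i} + A_{3,i} + A_{4,i}` and `σ̂`
the sample standard deviation of `S₁, …, Sₙ`,
`|σ̂ − σ| ≤ |(nσ)⁻¹ Σᵢ (A_{1,i}² − σ²)| + Σ_{l=2}^4 (n⁻¹ Σᵢ A_{l,i}²)^{1/2} + |n⁻¹ Σᵢ Sᵢ|`. -/
theorem stmt_19 (n : ℕ) (hn : 0 < n) (A : Fin 4 → Fin n → ℝ) (σ : ℝ) (hσ : 0 < σ)
    (hσ2 : |(∑ i, ((A 0 i) ^ 2 - σ ^ 2)) / n| ≤ σ ^ 2) :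
    let S : Fin n → ℝ := fun i => A 0 i + A 1 i + A 2 i + A 3 i;
    let σhat : ℝ := Real.sqrt ((∑ i, (S i - (∑ i', S i') / n) ^ 2) / n);
    |σhat - σ| ≤ |(∑ i, ((A 0 i) ^ 2 - σ ^ 2)) / (n * σ)|
      + (Real.sqrt ((∑ i, (A 1 i) ^ 2) / n) + Real.sqrt ((∑ i, (A 2 i) ^ 2) / n)
          + Real.sqrt ((∑ i, (A 3 i) ^ 2) / n))
      + |(∑ i, S i) / n| :=
  stmt_19_general n hn A σ hσ
end
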